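/- arXiv:1712.09105 — 7 statements merged into one kernel-verified Lean document; each statement's English description precedes it below -/
import Mathlib

section
/- Let β, φ, γ, ρ : [0,∞) → ℝ be continuous and nonnegative, and let p∞ : [0,∞) → ℝ be a nonnegative integrable function with ∫₀^∞ p∞(a) da = 1 and ∫₀^∞ p∞(a) (∫₀^a β(h) dh) da < ∞. Define R₀ := ∫₀^∞ ∫₀^a p∞(a) β(τ) exp(−∫_τ^a (φ(k)+γ(k)) dk) dτ da. If R₀ > 1, then there exist B ∈ (0,1) and continuously differentiable functions s*, i*, r* : [0,∞) → ℝ satisfying s*(0) = 1, i*(0) = 0, r*(0) = 0, the steady-state system ds*/da = −B β(a) s*(a), di*/da = B β(a) s*(a) − (φ(a)+γ(a)) i*(a) + B ρ(a) r*(a), dr*/da = (φ(a)+γ(a)) i*(a) − B ρ(a) r*(a), and the fixed-point condition B = ∫₀^∞ i*(a) p∞(a) da. -/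
/-!
Write `c = φ + γ`. Eliminating `r* = 1 - s* - i*` makes the system triangular:
`s* = exp (-B ∫₀^a β)`, and `i*` solves a linear equation whose source is proportional to `B`, so
`i* = B j_B`, where `j_B` is given by variation of constants and depends continuously on `(B, a)`
down to `B = 0`. For `B > 0` the fixed-point condition becomes `G B = 1` with
`G B = ∫₀^∞ j_B p∞`, and `G 0 = R₀ > 1`. Comparing `j_B` with the cumulative incidence
`u_B = ∫₀^a β s*`, for which `1 - s* = B u_B`, gives `0 ≤ j_B ≤ u_B ≤ ∫₀^a β`; so `G` is continuous
on `[0, ∞)` by dominated convergence, and `G 1 < 1` since `j_1 ≤ 1 - s* < 1`. The intermediate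
value theorem yields `B ∈ (0, 1)` with `G B = 1`. The rates, given on `[0, ∞)`, are extended to `ℝ`
by their value at `0`.
-/

open Set Filter MeasureTheory intervalIntegral

namespace EndemicSteadyState

noncomputable def prim (f : ℝ → ℝ) (a : ℝ) : ℝ := ∫ x in (0:ℝ)..a, f x

section Primitive

variable {f : ℝ → ℝ}

@[simp] lemma prim_zero : prim f 0 = 0 := integral_same

lemma hasDerivAt_prim (hf : Continuous f) (a : ℝ) : HasDerivAt (prim f) (f a) a :=
  (hf.integral_hasStrictDerivAt 0 a).hasDerivAt

@[fun_prop] lemma continuous_prim (hf : Continuous f) : Continuous (prim f) :=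
  continuous_iff_continuousAt.2 fun a => (hasDerivAt_prim hf a).continuousAt

lemma prim_nonneg (hf : ∀ x, 0 ≤ f x) {a : ℝ} (ha : 0 ≤ a) : 0 ≤ prim f a :=
  integral_nonneg ha fun x _ => hf x

lemma prim_sub_prim (hf : Continuous f) (τ a : ℝ) :
    prim f a - prim f τ = ∫ x in τ..a, f x :=
  integral_interval_sub_left (hf.intervalIntegrable _ _) (hf.intervalIntegrable _ _)

end Primitive

variable (β c ρ : ℝ → ℝ)

noncomputable def susceptible (B a : ℝ) : ℝ := Real.exp (-(B * prim β a))

/-- Once `r = 1 - s - i` is eliminated, `i' = B · inflow - (c + B ρ) i`; this is the primitive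
of the decay rate `c + B ρ`. -/
noncomputable def infectedDecay (B a : ℝ) : ℝ := prim c a + B * prim ρ a

noncomputable def inflow (B τ : ℝ) : ℝ := β τ * susceptible β B τ + ρ τ * (1 - susceptible β B τ)

/-- `i / B`; at `B = 0` it is the infected profile of the system linearized at the disease-free
state. -/
noncomputable def scaledInfected (B a : ℝ) : ℝ :=
  Real.exp (-infectedDecay c ρ B a) *
    ∫ τ in (0:ℝ)..a, inflow β ρ B τ * Real.exp (infectedDecay c ρ B τ)

noncomputable def infected (B a : ℝ) : ℝ := B * scaledInfected β c ρ B a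

noncomputable def recovered (B a : ℝ) : ℝ := 1 - susceptible β B a - infected β c ρ B a

noncomputable def incidence (B : ℝ) : ℝ → ℝ := prim fun τ => β τ * susceptible β B τ

variable {β c ρ}

section Derivatives

variable (hβ : Continuous β) (hc : Continuous c) (hρ : Continuous ρ)

@[simp] lemma susceptible_at_birth (B : ℝ) : susceptible β B 0 = 1 := by
  simp [susceptible]

@[simp] lemma infected_at_birth (B : ℝ) : infected β c ρ B 0 = 0 := by
  simp [infected, scaledInfected]

@[simp] lemma recovered_at_birth (B : ℝ) : recovered β c ρ B 0 = 0 := by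
  simp [recovered]

include hβ in
@[fun_prop] lemma continuous_susceptible (B : ℝ) : Continuous (susceptible β B) := by
  unfold susceptible
  fun_prop

include hβ in
lemma hasDerivAt_susceptible (B a : ℝ) :
    HasDerivAt (susceptible β B) (-(B * β a * susceptible β B a)) a :=
  (((hasDerivAt_prim hβ a).const_mul B).neg.exp).congr_deriv
    (by simp only [susceptible, Pi.neg_apply]; ring)

include hc hρ in
lemma hasDerivAt_infectedDecay (B a : ℝ) :
    HasDerivAt (infectedDecay c ρ B) (c a + B * ρ a) a :=
  (hasDerivAt_prim hc a).add ((hasDerivAt_prim hρ a).const_mul B)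

include hc hρ in
lemma continuous_infectedDecay (B : ℝ) : Continuous (infectedDecay c ρ B) := by
  unfold infectedDecay
  fun_prop

include hβ hc hρ in
lemma continuous_inflow_mul_exp :
    Continuous (Function.uncurry fun B τ => inflow β ρ B τ * Real.exp (infectedDecay c ρ B τ)) := by
  simp only [Function.uncurry_def, inflow, susceptible, infectedDecay]
  fun_prop

include hβ hc hρ in
lemma continuous_scaledInfected : Continuous (Function.uncurry (scaledInfected β c ρ)) := by
  have := continuous_parametric_primitive_of_continuous (μ := volume) (a₀ := 0)
    (continuous_inflow_mul_exp hβ hc hρ)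
  simp only [Function.uncurry_def, scaledInfected, infectedDecay]
  fun_prop

include hβ hc hρ in
lemma hasDerivAt_scaledInfected (B a : ℝ) :
    HasDerivAt (scaledInfected β c ρ B)
      (inflow β ρ B a - (c a + B * ρ a) * scaledInfected β c ρ B a) a := by
  have hg := (continuous_inflow_mul_exp hβ hc hρ).comp (Continuous.prodMk_right B)
  refine (((hasDerivAt_infectedDecay hc hρ B a).neg.exp).mul
    ((hg.integral_hasStrictDerivAt 0 a).hasDerivAt)).congr_deriv ?_
  have hexp : Real.exp (-infectedDecay c ρ B a) * Real.exp (infectedDecay c ρ B a) = 1 := by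
    rw [← Real.exp_add, neg_add_cancel, Real.exp_zero]
  simp only [scaledInfected, Function.comp_apply, Function.uncurry_apply_pair, Pi.neg_apply]
  linear_combination inflow β ρ B a * hexp

include hβ hc hρ in
lemma hasDerivAt_infected (B a : ℝ) :
    HasDerivAt (infected β c ρ B)
      (B * β a * susceptible β B a - c a * infected β c ρ B a
        + B * ρ a * recovered β c ρ B a) a :=
  ((hasDerivAt_scaledInfected hβ hc hρ B a).const_mul B).congr_deriv
    (by simp only [recovered, infected, inflow]; ring)

include hβ hc hρ in
lemma hasDerivAt_recovered (B a : ℝ) :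
    HasDerivAt (recovered β c ρ B)
      (c a * infected β c ρ B a - B * ρ a * recovered β c ρ B a) a :=
  (((hasDerivAt_susceptible hβ B a).const_sub 1).sub
    (hasDerivAt_infected hβ hc hρ B a)).congr_deriv (by ring)

end Derivatives

section Bounds

variable {B a : ℝ} (hβ : Continuous β) (hc : Continuous c) (hρ : Continuous ρ)
  (hβ0 : ∀ x, 0 ≤ β x) (hc0 : ∀ x, 0 ≤ c x) (hρ0 : ∀ x, 0 ≤ ρ x)

lemma susceptible_pos (B a : ℝ) : 0 < susceptible β B a := Real.exp_pos _

include hβ0 in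
lemma susceptible_le_one (hB : 0 ≤ B) (ha : 0 ≤ a) : susceptible β B a ≤ 1 :=
  Real.exp_le_one_iff.2 (neg_nonpos.2 (mul_nonneg hB (prim_nonneg hβ0 ha)))

include hβ in
lemma one_sub_susceptible (B a : ℝ) : 1 - susceptible β B a = B * incidence β B a := by
  have h := integral_eq_sub_of_hasDerivAt (fun x _ => hasDerivAt_susceptible hβ B x)
    (Continuous.intervalIntegrable (by fun_prop) 0 a)
  simp only [mul_assoc, intervalIntegral.integral_neg, intervalIntegral.integral_const_mul,
    susceptible_at_birth] at h
  rw [incidence, prim]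
  linarith

include hβ0 in
lemma incidence_nonneg (ha : 0 ≤ a) : 0 ≤ incidence β B a :=
  prim_nonneg (fun x => mul_nonneg (hβ0 x) (susceptible_pos B x).le) ha

include hβ hβ0 in
lemma incidence_le_prim (hB : 0 ≤ B) (ha : 0 ≤ a) : incidence β B a ≤ prim β a :=
  integral_mono_on ha (Continuous.intervalIntegrable (by fun_prop) 0 a)
    (hβ.intervalIntegrable 0 a)
    fun x hx => mul_le_of_le_one_right (hβ0 x) (susceptible_le_one hβ0 hB hx.1)

include hβ0 hρ0 in
lemma inflow_nonneg (hB : 0 ≤ B) (ha : 0 ≤ a) : 0 ≤ inflow β ρ B a :=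
  add_nonneg (mul_nonneg (hβ0 a) (susceptible_pos B a).le)
    (mul_nonneg (hρ0 a) (sub_nonneg.2 (susceptible_le_one hβ0 hB ha)))

include hβ0 hρ0 in
lemma scaledInfected_nonneg (hB : 0 ≤ B) (ha : 0 ≤ a) : 0 ≤ scaledInfected β c ρ B a :=
  mul_nonneg (Real.exp_pos _).le (integral_nonneg ha fun _ hx =>
    mul_nonneg (inflow_nonneg hβ0 hρ0 hB hx.1) (Real.exp_pos _).le)

include hβ hc hρ hβ0 hc0 in
/-- Comparison with `u e^Q`, where `u = incidence` and `Q = infectedDecay`: since `1 - s = B u`,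
the integrand `(β s + ρ B u) e^Q` is dominated by `(u e^Q)' = (β s + (c + B ρ) u) e^Q`. -/
lemma scaledInfected_le_incidence (ha : 0 ≤ a) :
    scaledInfected β c ρ B a ≤ incidence β B a := by
  set Q := infectedDecay c ρ B
  have hu (x : ℝ) : HasDerivAt (incidence β B) (β x * susceptible β B x) x :=
    hasDerivAt_prim (by fun_prop) x
  have hW (x : ℝ) : HasDerivAt (fun y => incidence β B y * Real.exp (Q y))
      (β x * susceptible β B x * Real.exp (Q x)
        + incidence β B x * (Real.exp (Q x) * (c x + B * ρ x))) x :=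
    (hu x).mul (hasDerivAt_infectedDecay hc hρ B x).exp
  have hQ : Continuous Q := continuous_infectedDecay hc hρ B
  have hI : Continuous (incidence β B) := by simp only [incidence]; fun_prop
  have hle : ∫ x in (0:ℝ)..a, inflow β ρ B x * Real.exp (Q x)
      ≤ incidence β B a * Real.exp (Q a) := by
    calc ∫ x in (0:ℝ)..a, inflow β ρ B x * Real.exp (Q x)
        ≤ ∫ x in (0:ℝ)..a, (β x * susceptible β B x * Real.exp (Q x)
            + incidence β B x * (Real.exp (Q x) * (c x + B * ρ x))) := by
          refine integral_mono_on ha ?_ ?_ fun x hx => ?_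
          · exact ((continuous_inflow_mul_exp hβ hc hρ).comp
              (Continuous.prodMk_right B)).intervalIntegrable 0 a
          · exact Continuous.intervalIntegrable (by fun_prop) 0 a
          have hcu := mul_nonneg (mul_nonneg (incidence_nonneg hβ0 (B := B) hx.1) (hc0 x))
            (Real.exp_pos (Q x)).le
          rw [inflow, one_sub_susceptible hβ]
          linarith
      _ = incidence β B a * Real.exp (Q a) := by
          rw [integral_eq_sub_of_hasDerivAt (fun x _ => hW x)
            (Continuous.intervalIntegrable (by fun_prop) 0 a)]
          simp [incidence]
  calc scaledInfected β c ρ B a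
      ≤ Real.exp (-Q a) * (incidence β B a * Real.exp (Q a)) :=
        mul_le_mul_of_nonneg_left hle (Real.exp_pos _).le
    _ = incidence β B a := by
        rw [mul_left_comm, ← Real.exp_add, neg_add_cancel, Real.exp_zero, mul_one]

include hβ hc hρ hβ0 hc0 hρ0 in
lemma abs_scaledInfected_le_prim (hB : 0 ≤ B) (ha : 0 ≤ a) :
    |scaledInfected β c ρ B a| ≤ prim β a := by
  rw [abs_of_nonneg (scaledInfected_nonneg hβ0 hρ0 hB ha)]
  exact (scaledInfected_le_incidence hβ hc hρ hβ0 hc0 ha).trans (incidence_le_prim hβ hβ0 hB ha)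

include hβ hc hρ hβ0 hc0 in
lemma scaledInfected_one_lt_one (ha : 0 ≤ a) : scaledInfected β c ρ 1 a < 1 := by
  have h := one_sub_susceptible hβ 1 a
  have := scaledInfected_le_incidence hβ hc hρ hβ0 hc0 (B := 1) ha
  linarith [susceptible_pos (β := β) 1 a]

end Bounds

lemma setIntegral_mul_pos {X : Type*} [MeasurableSpace X] {μ : Measure X} {s : Set X}
    {f p : X → ℝ} (hs : MeasurableSet s) (hf : ∀ x ∈ s, 0 < f x) (hp0 : ∀ x ∈ s, 0 ≤ p x)
    (hp : IntegrableOn p s μ) (hfp : IntegrableOn (fun x => f x * p x) s μ)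
    (h : 0 < ∫ x in s, p x ∂μ) : 0 < ∫ x in s, f x * p x ∂μ := by
  rw [setIntegral_pos_iff_support_of_nonneg_ae (ae_restrict_of_forall_mem hs hp0) hp] at h
  rw [setIntegral_pos_iff_support_of_nonneg_ae
    (ae_restrict_of_forall_mem hs fun x hx => mul_nonneg (hf x hx).le (hp0 x hx)) hfp]
  exact h.trans_le (measure_mono fun x ⟨hx, hxs⟩ => ⟨mul_ne_zero (hf x hxs).ne' hx, hxs⟩)

variable (β c ρ) in
noncomputable def scaledForce (p : ℝ → ℝ) (B : ℝ) : ℝ :=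
  ∫ a in Ioi (0:ℝ), scaledInfected β c ρ B a * p a

section FixedPoint

variable {p : ℝ → ℝ} (hβ : Continuous β) (hc : Continuous c) (hρ : Continuous ρ)
  (hβ0 : ∀ x, 0 ≤ β x) (hc0 : ∀ x, 0 ≤ c x) (hρ0 : ∀ x, 0 ≤ ρ x)
  (hp0 : ∀ a ∈ Ioi (0:ℝ), 0 ≤ p a) (hp_int : IntegrableOn p (Ioi 0))
  (hβ_int : IntegrableOn (fun a => p a * prim β a) (Ioi 0))

include hβ hc hρ hβ0 hc0 hρ0 hp0 in
lemma norm_scaledInfected_mul_le {B : ℝ} (hB : 0 ≤ B) :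
    ∀ᵐ a ∂volume.restrict (Ioi (0:ℝ)), ‖scaledInfected β c ρ B a * p a‖ ≤ p a * prim β a :=
  ae_restrict_of_forall_mem measurableSet_Ioi fun a ha => by
    rw [norm_mul, Real.norm_eq_abs, Real.norm_of_nonneg (hp0 a ha), mul_comm]
    exact mul_le_mul_of_nonneg_left
      (abs_scaledInfected_le_prim hβ hc hρ hβ0 hc0 hρ0 hB (le_of_lt ha)) (hp0 a ha)

include hβ hc hρ hp_int in
lemma aestronglyMeasurable_scaledInfected_mul (B : ℝ) :
    AEStronglyMeasurable (fun a => scaledInfected β c ρ B a * p a) (volume.restrict (Ioi 0)) :=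
  ((continuous_scaledInfected hβ hc hρ).comp (Continuous.prodMk_right B)).aestronglyMeasurable.mul
    hp_int.1

include hβ hc hρ hβ0 hc0 hρ0 hp0 hp_int hβ_int in
lemma continuousOn_scaledForce : ContinuousOn (scaledForce β c ρ p) (Ici 0) :=
  continuousOn_of_dominated
    (fun B _ => aestronglyMeasurable_scaledInfected_mul hβ hc hρ hp_int B)
    (fun _ hB => norm_scaledInfected_mul_le hβ hc hρ hβ0 hc0 hρ0 hp0 hB) hβ_int
    (Eventually.of_forall fun a =>
      (((continuous_scaledInfected hβ hc hρ).comp (Continuous.prodMk_left a)).mul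
        continuous_const).continuousOn)

include hβ hc hρ hβ0 hc0 hρ0 hp0 hp_int hβ_int in
lemma scaledForce_one_lt_one (hp_one : ∫ a in Ioi (0:ℝ), p a = 1) :
    scaledForce β c ρ p 1 < 1 := by
  have hint : IntegrableOn (fun a => scaledInfected β c ρ 1 a * p a) (Ioi 0) :=
    hβ_int.mono' (aestronglyMeasurable_scaledInfected_mul hβ hc hρ hp_int 1)
      (norm_scaledInfected_mul_le hβ hc hρ hβ0 hc0 hρ0 hp0 zero_le_one)
  have hdiff : IntegrableOn (fun a => (1 - scaledInfected β c ρ 1 a) * p a) (Ioi 0) :=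
    (hp_int.sub hint).congr_fun (fun a _ => by simp only [Pi.sub_apply]; ring) measurableSet_Ioi
  have hpos := setIntegral_mul_pos measurableSet_Ioi
    (fun a ha => sub_pos.2 (scaledInfected_one_lt_one hβ hc hρ hβ0 hc0 (le_of_lt ha))) hp0
    hp_int hdiff (hp_one ▸ one_pos)
  simp only [sub_mul, one_mul] at hpos
  rw [integral_sub hp_int hint, hp_one] at hpos
  exact sub_pos.1 hpos

include hβ hc hρ hβ0 hc0 hρ0 hp0 hp_int hβ_int in
lemma exists_scaledForce_eq_one (hp_one : ∫ a in Ioi (0:ℝ), p a = 1)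
    (hR0 : 1 < scaledForce β c ρ p 0) : ∃ B ∈ Ioo (0:ℝ) 1, scaledForce β c ρ p B = 1 :=
  intermediate_value_Ioo' zero_le_one
    ((continuousOn_scaledForce hβ hc hρ hβ0 hc0 hρ0 hp0 hp_int hβ_int).mono Icc_subset_Ici_self)
    ⟨scaledForce_one_lt_one hβ hc hρ hβ0 hc0 hρ0 hp0 hp_int hβ_int hp_one, hR0⟩

end FixedPoint

lemma scaledInfected_zero (hc : Continuous c) (a : ℝ) :
    scaledInfected β c ρ 0 a = ∫ τ in (0:ℝ)..a, β τ * Real.exp (-∫ k in τ..a, c k) := by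
  simp only [scaledInfected, infectedDecay, inflow, susceptible, zero_mul, neg_zero,
    Real.exp_zero, sub_self, mul_zero, add_zero, mul_one, ← intervalIntegral.integral_const_mul]
  refine integral_congr fun τ _ => ?_
  rw [← prim_sub_prim hc, neg_sub, sub_eq_add_neg, Real.exp_add]
  ring

theorem exists_force_eq_integral_infected {p : ℝ → ℝ} (hβ : Continuous β) (hc : Continuous c)
    (hρ : Continuous ρ) (hβ0 : ∀ x, 0 ≤ β x) (hc0 : ∀ x, 0 ≤ c x) (hρ0 : ∀ x, 0 ≤ ρ x)
    (hp0 : ∀ a ∈ Ioi (0:ℝ), 0 ≤ p a) (hp_int : IntegrableOn p (Ioi 0))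
    (hp_one : ∫ a in Ioi (0:ℝ), p a = 1)
    (hβ_int : IntegrableOn (fun a => p a * prim β a) (Ioi 0))
    (hR0 : 1 < ∫ a in Ioi (0:ℝ), ∫ τ in (0:ℝ)..a, p a * β τ * Real.exp (-∫ k in τ..a, c k)) :
    ∃ B ∈ Ioo (0:ℝ) 1, B = ∫ a in Ioi (0:ℝ), infected β c ρ B a * p a := by
  have hR0' : 1 < scaledForce β c ρ p 0 := by
    refine hR0.trans_eq (setIntegral_congr_fun measurableSet_Ioi fun a _ => ?_)
    rw [scaledInfected_zero hc, ← intervalIntegral.integral_mul_const]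
    exact integral_congr fun τ _ => by ring
  obtain ⟨B, hB, hfix⟩ :=
    exists_scaledForce_eq_one hβ hc hρ hβ0 hc0 hρ0 hp0 hp_int hβ_int hp_one hR0'
  refine ⟨B, hB, ?_⟩
  rw [scaledForce] at hfix
  simp only [infected, mul_assoc, MeasureTheory.integral_const_mul, hfix, mul_one]

def extendFromIci (f : ℝ → ℝ) (x : ℝ) : ℝ := f (max x 0)

section Extension

variable {f : ℝ → ℝ}

@[simp] lemma extendFromIci_of_nonneg {x : ℝ} (hx : 0 ≤ x) : extendFromIci f x = f x := by
  rw [extendFromIci, max_eq_left hx]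

lemma continuous_extendFromIci (hf : ContinuousOn f (Ici 0)) : Continuous (extendFromIci f) :=
  hf.comp_continuous (continuous_id.max continuous_const) fun x => le_max_right x 0

lemma extendFromIci_nonneg (hf : ∀ x ∈ Ici (0:ℝ), 0 ≤ f x) (x : ℝ) : 0 ≤ extendFromIci f x :=
  hf _ (le_max_right x 0)

lemma integral_extendFromIci {τ a : ℝ} (hτ : 0 ≤ τ) (ha : 0 ≤ a) :
    ∫ x in τ..a, extendFromIci f x = ∫ x in τ..a, f x :=
  integral_congr fun _ hx => extendFromIci_of_nonneg ((le_inf hτ ha).trans hx.1)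

end Extension

end EndemicSteadyState

open EndemicSteadyState

/-- Existence of an endemic non-uniform steady state for the normalized
age-structured model when the basic reproductive number
`R₀ = ∫₀^∞ ∫₀^a p∞(a) β(τ) exp(−∫_τ^a (φ(k)+γ(k)) dk) dτ da` exceeds `1`: there
exist `B ∈ (0,1)` and continuously differentiable profiles `s*, i*, r*` on `[0,∞)`
solving the steady-state system with the fixed-point condition
`B = ∫₀^∞ i*(a) p∞(a) da`. -/
theorem endemic_steady_state_exists
    (β φ γ ρ pinf : ℝ → ℝ)
    (hβc : ContinuousOn β (Ici 0)) (hφc : ContinuousOn φ (Ici 0))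
    (hγc : ContinuousOn γ (Ici 0)) (hρc : ContinuousOn ρ (Ici 0))
    (hβ0 : ∀ a ∈ Ici (0:ℝ), 0 ≤ β a) (hφ0 : ∀ a ∈ Ici (0:ℝ), 0 ≤ φ a)
    (hγ0 : ∀ a ∈ Ici (0:ℝ), 0 ≤ γ a) (hρ0 : ∀ a ∈ Ici (0:ℝ), 0 ≤ ρ a)
    (hp0 : ∀ a ∈ Ici (0:ℝ), 0 ≤ pinf a)
    (hp_int : IntegrableOn pinf (Ioi 0))
    (hp_one : ∫ a in Ioi (0:ℝ), pinf a = 1)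
    (hβ_int : IntegrableOn (fun a => pinf a * ∫ h in (0:ℝ)..a, β h) (Ioi 0))
    (hR0 : 1 < ∫ a in Ioi (0:ℝ), ∫ τ in (0:ℝ)..a,
        pinf a * β τ * Real.exp (-(∫ k in τ..a, (φ k + γ k)))) :
    ∃ B ∈ Ioo (0:ℝ) 1, ∃ sStar iStar rStar : ℝ → ℝ,
      sStar 0 = 1 ∧ iStar 0 = 0 ∧ rStar 0 = 0 ∧
      (∀ a ∈ Ici (0:ℝ),
          HasDerivWithinAt sStar (-(B * β a * sStar a)) (Ici 0) a) ∧
      (∀ a ∈ Ici (0:ℝ),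
          HasDerivWithinAt iStar
            (B * β a * sStar a - (φ a + γ a) * iStar a + B * ρ a * rStar a)
            (Ici 0) a) ∧
      (∀ a ∈ Ici (0:ℝ),
          HasDerivWithinAt rStar
            ((φ a + γ a) * iStar a - B * ρ a * rStar a) (Ici 0) a) ∧
      B = ∫ a in Ioi (0:ℝ), iStar a * pinf a := by
  set b := extendFromIci β
  set c := extendFromIci (φ + γ)
  set r := extendFromIci ρ
  have hβ : Continuous b := continuous_extendFromIci hβc
  have hc : Continuous c := continuous_extendFromIci (hφc.add hγc)
  have hρ : Continuous r := continuous_extendFromIci hρc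
  have hβ_int' : IntegrableOn (fun a => pinf a * prim b a) (Ioi 0) :=
    hβ_int.congr_fun (fun a ha => by rw [prim, integral_extendFromIci le_rfl (le_of_lt ha)])
      measurableSet_Ioi
  have hR0' : 1 < ∫ a in Ioi (0:ℝ), ∫ τ in (0:ℝ)..a,
      pinf a * b τ * Real.exp (-∫ k in τ..a, c k) :=
    hR0.trans_eq (setIntegral_congr_fun measurableSet_Ioi fun a ha =>
      integral_congr fun τ hτ => by
        rw [uIcc_of_le (le_of_lt ha)] at hτ
        simp only [b, c, extendFromIci_of_nonneg hτ.1, integral_extendFromIci hτ.1 (le_of_lt ha),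
          Pi.add_apply])
  obtain ⟨B, hB, hfix⟩ := exists_force_eq_integral_infected hβ hc hρ
    (extendFromIci_nonneg hβ0) (extendFromIci_nonneg fun a ha => add_nonneg (hφ0 a ha) (hγ0 a ha))
    (extendFromIci_nonneg hρ0) (fun a ha => hp0 a (Ioi_subset_Ici_self ha)) hp_int hp_one
    hβ_int' hR0'
  refine ⟨B, hB, susceptible b B, infected b c r B, recovered b c r B, susceptible_at_birth B,
    infected_at_birth B, recovered_at_birth B, fun a ha => ?_, fun a ha => ?_, fun a ha => ?_, hfix⟩
  all_goals simp only [mem_Ici] at ha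
  · simpa [b, ha] using (hasDerivAt_susceptible hβ B a).hasDerivWithinAt
  · simpa [b, c, r, ha] using (hasDerivAt_infected hβ hc hρ B a).hasDerivWithinAt
  · simpa [c, r, ha] using (hasDerivAt_recovered hβ hc hρ B a).hasDerivWithinAt
end

section
/- Let μ, β, φ, γ, ρ be positive real constants and let B ∈ (0,1] be such that φ+γ+B(ρ−β) ≠ 0. Define i_B : [0,∞) → ℝ by i_B(a) = Bρ/(φ+γ+Bρ) − [B(ρ−β)/(φ+γ+B(ρ−β))]·e^{−Bβa} − [Bβ(φ+γ)/((φ+γ+Bρ)(φ+γ+B(ρ−β)))]·e^{−(φ+γ+Bρ)a}. Then μ ∫₀^∞ i_B(a) e^{−μa} da = B · (B + μ/ρ) / ((B + μ/β)(B + (μ+φ+γ)/ρ)). -/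
open Set MeasureTheory

/-! Multiplying by `e^{-μa}` turns each term `e^{-ka}` of `i_B` into `e^{-(k+μ)a}`, whose integral
over `(0, ∞)` is `1/(k+μ)`; what remains is an identity between rational functions of `B`. -/

/-- The explicit infected-class steady-state profile `i_B` in the
constant-coefficient case of the age-structured model. -/
noncomputable def iProfile (β φ γ ρ B a : ℝ) : ℝ :=
  B * ρ / (φ + γ + B * ρ)
    - B * (ρ - β) / (φ + γ + B * (ρ - β)) * Real.exp (-(B * β * a))
    - B * β * (φ + γ) / ((φ + γ + B * ρ) * (φ + γ + B * (ρ - β)))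
        * Real.exp (-((φ + γ + B * ρ) * a))

theorem integrableOn_exp_neg_mul_Ioi {c : ℝ} (hc : 0 < c) :
    IntegrableOn (fun a => Real.exp (-(c * a))) (Ioi 0) := by
  simpa only [neg_mul] using integrableOn_exp_mul_Ioi (neg_neg_iff_pos.2 hc) 0

theorem integral_exp_neg_mul_Ioi {c : ℝ} (hc : 0 < c) :
    ∫ a in Ioi (0 : ℝ), Real.exp (-(c * a)) = c⁻¹ := by
  simp only [← neg_mul, integral_exp_mul_Ioi (neg_neg_iff_pos.2 hc), mul_zero, Real.exp_zero,
    neg_div, one_div, inv_neg, neg_neg]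

theorem exp_neg_mul_mul_exp_neg_mul (k μ a : ℝ) :
    Real.exp (-(k * a)) * Real.exp (-(μ * a)) = Real.exp (-((k + μ) * a)) := by
  rw [← Real.exp_add]; ring_nf

theorem mul_integral_const_sub_exp_sub_exp_mul_exp {μ k₁ k₂ : ℝ} (c₀ c₁ c₂ : ℝ) (hμ : 0 < μ)
    (h₁ : 0 < k₁ + μ) (h₂ : 0 < k₂ + μ) :
    μ * ∫ a in Ioi (0 : ℝ),
        (c₀ - c₁ * Real.exp (-(k₁ * a)) - c₂ * Real.exp (-(k₂ * a))) * Real.exp (-(μ * a)) =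
      c₀ - c₁ * μ / (k₁ + μ) - c₂ * μ / (k₂ + μ) := by
  have hsplit : ∀ a : ℝ,
      (c₀ - c₁ * Real.exp (-(k₁ * a)) - c₂ * Real.exp (-(k₂ * a))) * Real.exp (-(μ * a)) =
        c₀ * Real.exp (-(μ * a)) - c₁ * Real.exp (-((k₁ + μ) * a))
          - c₂ * Real.exp (-((k₂ + μ) * a)) := by
    intro a
    rw [← exp_neg_mul_mul_exp_neg_mul k₁, ← exp_neg_mul_mul_exp_neg_mul k₂]
    ring
  have i₀ := (integrableOn_exp_neg_mul_Ioi hμ).const_mul c₀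
  have i₁ := (integrableOn_exp_neg_mul_Ioi h₁).const_mul c₁
  have i₂ := (integrableOn_exp_neg_mul_Ioi h₂).const_mul c₂
  have hsub := integral_sub (i₀.sub i₁) i₂
  simp only [Pi.sub_apply] at hsub
  rw [integral_congr_ae (ae_of_all _ hsplit), hsub, integral_sub i₀ i₁,
    integral_const_mul, integral_const_mul, integral_const_mul, integral_exp_neg_mul_Ioi hμ,
    integral_exp_neg_mul_Ioi h₁, integral_exp_neg_mul_Ioi h₂]
  field_simp

/-- With `p∞(a) = μ e^{−μa}`, the fixed-point map satisfies
`H(B) = μ ∫₀^∞ i_B(a) e^{−μa} da = B (B + μ/ρ)/((B + μ/β)(B + (μ+φ+γ)/ρ))`,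
that is, `Ĝ(B) = H(B)/B` has the explicit closed form of the paper. -/
theorem fixed_point_map_explicit_formula
    (μ β φ γ ρ B : ℝ) (hμ : 0 < μ) (hβ : 0 < β) (hφ : 0 < φ) (hγ : 0 < γ) (hρ : 0 < ρ)
    (hB : B ∈ Ioc (0:ℝ) 1) (hne : φ + γ + B * (ρ - β) ≠ 0) :
    μ * ∫ a in Ioi (0:ℝ), iProfile β φ γ ρ B a * Real.exp (-(μ * a)) =
      B * ((B + μ / ρ) / ((B + μ / β) * (B + (μ + φ + γ) / ρ))) := by
  obtain ⟨hB₀, -⟩ := hB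
  have hBρ : 0 < φ + γ + B * ρ := by positivity
  unfold iProfile
  rw [mul_integral_const_sub_exp_sub_exp_mul_exp _ _ _ hμ (by positivity) (by positivity)]
  field_simp
  ring
end

section
/- Let β, φ, γ, ρ ≥ 0 be real constants and B > 0 a real number with φ+γ+B(ρ−β) ≠ 0 and φ+γ+Bρ ≠ 0. Define s_B(a) = e^{−Bβa}, i_B(a) = Bρ/(φ+γ+Bρ) − [B(ρ−β)/(φ+γ+B(ρ−β))]·e^{−Bβa} − [Bβ(φ+γ)/((φ+γ+Bρ)(φ+γ+B(ρ−β)))]·e^{−(φ+γ+Bρ)a}, and r_B(a) = (φ+γ)/(φ+γ+Bρ) − [(φ+γ)/(φ+γ+B(ρ−β))]·e^{−Bβa} + [Bβ(φ+γ)/((φ+γ+Bρ)(φ+γ+B(ρ−β)))]·e^{−(φ+γ+Bρ)a}. Then for all a ≥ 0: s_B'(a) = −Bβ s_B(a), i_B'(a) = Bβ s_B(a) − (φ+γ) i_B(a) + Bρ r_B(a), r_B'(a) = (φ+γ) i_B(a) − Bρ r_B(a), with s_B(0) = 1, i_B(0) = 0, r_B(0) = 0. -/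
open Set

/-- Susceptible steady-state profile in the constant-coefficient case. -/
noncomputable def sProf (β B a : ℝ) : ℝ := Real.exp (-(B * β * a))

/-- Infected steady-state profile in the constant-coefficient case. -/
noncomputable def iProf (β φ γ ρ B a : ℝ) : ℝ :=
  B * ρ / (φ + γ + B * ρ)
    - B * (ρ - β) / (φ + γ + B * (ρ - β)) * Real.exp (-(B * β * a))
    - B * β * (φ + γ) / ((φ + γ + B * ρ) * (φ + γ + B * (ρ - β)))
        * Real.exp (-((φ + γ + B * ρ) * a))

/-- Temporarily-recovered steady-state profile in the constant-coefficient case. -/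
noncomputable def rProf (β φ γ ρ B a : ℝ) : ℝ :=
  (φ + γ) / (φ + γ + B * ρ)
    - (φ + γ) / (φ + γ + B * (ρ - β)) * Real.exp (-(B * β * a))
    + B * β * (φ + γ) / ((φ + γ + B * ρ) * (φ + γ + B * (ρ - β)))
        * Real.exp (-((φ + γ + B * ρ) * a))

/-! Each profile is a linear combination of `1`, `exp (-(B β a))` and `exp (-((φ + γ + B ρ) a))`,
so every equation of the system, and every initial condition, reduces to rational identities
between the coefficients, valid as long as `φ + γ + B (ρ - β)` and `φ + γ + B ρ` do not vanish. -/

lemma hasDerivAt_exp_neg_mul (c a : ℝ) :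
    HasDerivAt (fun x => Real.exp (-(c * x))) (-c * Real.exp (-(c * a))) a := by
  simpa [mul_comm] using ((hasDerivAt_id a).const_mul c).neg.exp

lemma hasDerivAt_sProf (β B a : ℝ) : HasDerivAt (sProf β B) (-(B * β * sProf β B a)) a :=
  (hasDerivAt_exp_neg_mul (B * β) a).congr_deriv (neg_mul _ _)

section ConstantCoefficients

variable {β φ γ ρ B : ℝ}

lemma hasDerivAt_iProf (hne : φ + γ + B * (ρ - β) ≠ 0) (hne' : φ + γ + B * ρ ≠ 0) (a : ℝ) :
    HasDerivAt (iProf β φ γ ρ B)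
      (B * β * sProf β B a - (φ + γ) * iProf β φ γ ρ B a + B * ρ * rProf β φ γ ρ B a) a := by
  refine (((hasDerivAt_const a (B * ρ / (φ + γ + B * ρ))).sub
    ((hasDerivAt_exp_neg_mul (B * β) a).const_mul (B * (ρ - β) / (φ + γ + B * (ρ - β))))).sub
    ((hasDerivAt_exp_neg_mul (φ + γ + B * ρ) a).const_mul
      (B * β * (φ + γ) / ((φ + γ + B * ρ) * (φ + γ + B * (ρ - β)))))).congr_deriv ?_
  simp only [sProf, iProf, rProf]
  field_simp
  ring

lemma hasDerivAt_rProf (hne : φ + γ + B * (ρ - β) ≠ 0) (hne' : φ + γ + B * ρ ≠ 0) (a : ℝ) :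
    HasDerivAt (rProf β φ γ ρ B)
      ((φ + γ) * iProf β φ γ ρ B a - B * ρ * rProf β φ γ ρ B a) a := by
  refine (((hasDerivAt_const a ((φ + γ) / (φ + γ + B * ρ))).sub
    ((hasDerivAt_exp_neg_mul (B * β) a).const_mul ((φ + γ) / (φ + γ + B * (ρ - β))))).add
    ((hasDerivAt_exp_neg_mul (φ + γ + B * ρ) a).const_mul
      (B * β * (φ + γ) / ((φ + γ + B * ρ) * (φ + γ + B * (ρ - β)))))).congr_deriv ?_
  simp only [iProf, rProf]
  field_simp
  ring

lemma sProf_zero : sProf β B 0 = 1 := by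
  simp [sProf]

lemma iProf_zero (hne : φ + γ + B * (ρ - β) ≠ 0) (hne' : φ + γ + B * ρ ≠ 0) :
    iProf β φ γ ρ B 0 = 0 := by
  simp only [iProf, mul_zero, neg_zero, Real.exp_zero, mul_one]
  field_simp
  ring

lemma rProf_zero (hne : φ + γ + B * (ρ - β) ≠ 0) (hne' : φ + γ + B * ρ ≠ 0) :
    rProf β φ γ ρ B 0 = 0 := by
  simp only [rProf, mul_zero, neg_zero, Real.exp_zero, mul_one]
  field_simp
  ring

end ConstantCoefficients

theorem constant_coefficient_steady_state_profiles_general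
    (β φ γ ρ B : ℝ)
    (hne : φ + γ + B * (ρ - β) ≠ 0) (hne' : φ + γ + B * ρ ≠ 0) :
    (∀ a ∈ Ici (0:ℝ),
        HasDerivAt (fun x => sProf β B x) (-(B * β * sProf β B a)) a) ∧
    (∀ a ∈ Ici (0:ℝ),
        HasDerivAt (fun x => iProf β φ γ ρ B x)
          (B * β * sProf β B a - (φ + γ) * iProf β φ γ ρ B a
            + B * ρ * rProf β φ γ ρ B a) a) ∧
    (∀ a ∈ Ici (0:ℝ),
        HasDerivAt (fun x => rProf β φ γ ρ B x)
          ((φ + γ) * iProf β φ γ ρ B a - B * ρ * rProf β φ γ ρ B a) a) ∧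
    sProf β B 0 = 1 ∧ iProf β φ γ ρ B 0 = 0 ∧ rProf β φ γ ρ B 0 = 0 :=
  ⟨fun a _ => hasDerivAt_sProf β B a, fun a _ => hasDerivAt_iProf hne hne' a,
    fun a _ => hasDerivAt_rProf hne hne' a, sProf_zero, iProf_zero hne hne', rProf_zero hne hne'⟩

/-- The explicit constant-coefficient profiles `s_B, i_B, r_B` solve the steady-state
system `s' = −Bβs`, `i' = Bβs − (φ+γ)i + Bρr`, `r' = (φ+γ)i − Bρr` on `[0,∞)` with
`s_B(0) = 1`, `i_B(0) = 0`, `r_B(0) = 0`. -/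
theorem constant_coefficient_steady_state_profiles
    (β φ γ ρ B : ℝ) (hβ : 0 ≤ β) (hφ : 0 ≤ φ) (hγ : 0 ≤ γ) (hρ : 0 ≤ ρ) (hB : 0 < B)
    (hne : φ + γ + B * (ρ - β) ≠ 0) (hne' : φ + γ + B * ρ ≠ 0) :
    (∀ a ∈ Ici (0:ℝ),
        HasDerivAt (fun x => sProf β B x) (-(B * β * sProf β B a)) a) ∧
    (∀ a ∈ Ici (0:ℝ),
        HasDerivAt (fun x => iProf β φ γ ρ B x)
          (B * β * sProf β B a - (φ + γ) * iProf β φ γ ρ B a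
            + B * ρ * rProf β φ γ ρ B a) a) ∧
    (∀ a ∈ Ici (0:ℝ),
        HasDerivAt (fun x => rProf β φ γ ρ B x)
          ((φ + γ) * iProf β φ γ ρ B a - B * ρ * rProf β φ γ ρ B a) a) ∧
    sProf β B 0 = 1 ∧ iProf β φ γ ρ B 0 = 0 ∧ rProf β φ γ ρ B 0 = 0 :=
  constant_coefficient_steady_state_profiles_general β φ γ ρ B hne hne'
end

section
/- Let β, φ, γ, ρ : [0,∞) → ℝ be continuous and B ≥ 0 a real number. Define s_B(a) = exp(−B ∫₀^a β(h) dh), r_B(a) = ∫₀^a (φ(τ)+γ(τ))(1 − s_B(τ)) exp(−∫_τ^a (φ(h)+γ(h)+Bρ(h)) dh) dτ, and i_B(a) = 1 − s_B(a) − r_B(a). Then for all a ≥ 0: s_B'(a) = −B β(a) s_B(a), i_B'(a) = B β(a) s_B(a) − (φ(a)+γ(a)) i_B(a) + B ρ(a) r_B(a), r_B'(a) = (φ(a)+γ(a)) i_B(a) − B ρ(a) r_B(a), with s_B(0) = 1, i_B(0) = 0, r_B(0) = 0. -/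
open Set MeasureTheory

/-- Susceptible steady-state profile `s_B(a) = exp(−B ∫₀^a β(h) dh)` for
age-dependent transmission rate `β` and force-of-infection parameter `B`. -/
noncomputable def sSt (β : ℝ → ℝ) (B a : ℝ) : ℝ :=
  Real.exp (-(B * ∫ h in (0:ℝ)..a, β h))

/-- Temporarily-recovered steady-state profile
`r_B(a) = ∫₀^a (φ(τ)+γ(τ))(1 − s_B(τ)) exp(−∫_τ^a (φ+γ+Bρ)) dτ`. -/
noncomputable def rSt (β φ γ ρ : ℝ → ℝ) (B a : ℝ) : ℝ :=
  ∫ τ in (0:ℝ)..a, (φ τ + γ τ) * (1 - sSt β B τ)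
      * Real.exp (-(∫ h in τ..a, (φ h + γ h + B * ρ h)))

/-- Infected steady-state profile `i_B(a) = 1 − s_B(a) − r_B(a)`. -/
noncomputable def iSt (β φ γ ρ : ℝ → ℝ) (B a : ℝ) : ℝ :=
  1 - sSt β B a - rSt β φ γ ρ B a

/-!
The coefficients only enter the profiles on `[0, ∞)`, so they may be replaced by continuous
extensions to all of `ℝ`, where the equations become plain derivatives. Then `s_B` is the
exponential of a primitive, and `r_B` is the variation-of-constants solution of
`r' = (φ + γ)(1 − s_B) − (φ + γ + Bρ) r`, `r(0) = 0`: factoring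
`exp(−∫_τ^a) = exp(−G a) exp(G τ)` with `G` a primitive of `φ + γ + Bρ` reduces it to the
product rule. The equation for `i_B = 1 − s_B − r_B` is the difference of the other two.
-/

theorem ContinuousOn.exists_continuous_eqOn_Ici {α β : Type*} [LinearOrder α]
    [TopologicalSpace α] [OrderClosedTopology α] [TopologicalSpace β]
    {f : α → β} {a : α} (hf : ContinuousOn f (Ici a)) :
    ∃ g : α → β, Continuous g ∧ EqOn f g (Ici a) :=
  ⟨fun x => f (max a x),
    hf.comp_continuous (continuous_const.max continuous_id) fun x => le_max_left a x,
    fun x hx => by simp only [max_eq_right (mem_Ici.mp hx)]⟩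

theorem intervalIntegral.integral_congr_of_eqOn_Ici {E : Type*} [NormedAddCommGroup E]
    [NormedSpace ℝ E] {μ : Measure ℝ} {f g : ℝ → E} {c a b : ℝ}
    (hfg : EqOn f g (Ici c)) (ha : c ≤ a) (hb : c ≤ b) :
    ∫ x in a..b, f x ∂μ = ∫ x in a..b, g x ∂μ :=
  intervalIntegral.integral_congr <| hfg.mono <| ordConnected_Ici.uIcc_subset ha hb

theorem integral_mul_exp_neg_integral_eq {f g : ℝ → ℝ} (hg : Continuous g) (x : ℝ) :
    ∫ τ in (0:ℝ)..x, f τ * Real.exp (-∫ h in τ..x, g h) =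
      Real.exp (-∫ h in (0:ℝ)..x, g h) * ∫ τ in (0:ℝ)..x, f τ * Real.exp (∫ h in (0:ℝ)..τ, g h) := by
  rw [← intervalIntegral.integral_const_mul]
  refine intervalIntegral.integral_congr fun τ _ => ?_
  rw [← intervalIntegral.integral_interval_sub_left (hg.intervalIntegrable 0 x)
    (hg.intervalIntegrable 0 τ), neg_sub, Real.exp_sub, Real.exp_neg]
  ring

/-- Variation of constants: this is the solution of `y' = f - g y`, `y 0 = 0`. -/
theorem hasDerivAt_integral_mul_exp_neg_integral {f g : ℝ → ℝ} (hf : Continuous f)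
    (hg : Continuous g) (a : ℝ) :
    HasDerivAt (fun x => ∫ τ in (0:ℝ)..x, f τ * Real.exp (-∫ h in τ..x, g h))
      (f a - g a * ∫ τ in (0:ℝ)..a, f τ * Real.exp (-∫ h in τ..a, g h)) a := by
  have hG := fun x => (hg.integral_hasStrictDerivAt 0 x).hasDerivAt
  have hGc : Continuous fun x => ∫ h in (0:ℝ)..x, g h :=
    continuous_iff_continuousAt.mpr fun x => (hG x).continuousAt
  have hF := ((hf.mul hGc.rexp).integral_hasStrictDerivAt 0 a).hasDerivAt
  simp only [integral_mul_exp_neg_integral_eq hg]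
  refine ((hG a).neg.exp.mul hF).congr_deriv ?_
  have hcancel : Real.exp (-∫ h in (0:ℝ)..a, g h) * Real.exp (∫ h in (0:ℝ)..a, g h) = 1 := by
    rw [← Real.exp_add, neg_add_cancel, Real.exp_zero]
  simp only [Pi.neg_apply, Pi.mul_apply]
  linear_combination f a * hcancel

section ContinuousCoefficients

variable {β φ γ ρ : ℝ → ℝ} (B : ℝ)

theorem hasDerivAt_sSt (hβ : Continuous β) (a : ℝ) :
    HasDerivAt (sSt β B) (-(B * β a * sSt β B a)) a := by
  refine (((hβ.integral_hasStrictDerivAt 0 a).hasDerivAt.const_mul B).neg.exp).congr_deriv ?_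
  simp only [sSt, Pi.neg_apply]
  ring

theorem continuous_sSt (hβ : Continuous β) : Continuous (sSt β B) :=
  continuous_iff_continuousAt.mpr fun a => (hasDerivAt_sSt B hβ a).continuousAt

theorem hasDerivAt_rSt (hβ : Continuous β) (hφ : Continuous φ) (hγ : Continuous γ)
    (hρ : Continuous ρ) (a : ℝ) :
    HasDerivAt (rSt β φ γ ρ B)
      ((φ a + γ a) * iSt β φ γ ρ B a - B * ρ a * rSt β φ γ ρ B a) a := by
  have hf : Continuous fun τ => (φ τ + γ τ) * (1 - sSt β B τ) :=
    (hφ.add hγ).mul (continuous_const.sub (continuous_sSt B hβ))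
  have hg : Continuous fun h => φ h + γ h + B * ρ h := by fun_prop
  refine (hasDerivAt_integral_mul_exp_neg_integral hf hg a).congr_deriv ?_
  rw [iSt, rSt]
  ring

theorem hasDerivAt_iSt (hβ : Continuous β) (hφ : Continuous φ) (hγ : Continuous γ)
    (hρ : Continuous ρ) (a : ℝ) :
    HasDerivAt (iSt β φ γ ρ B)
      (B * β a * sSt β B a - (φ a + γ a) * iSt β φ γ ρ B a + B * ρ a * rSt β φ γ ρ B a) a := by
  refine (((hasDerivAt_const a 1).sub (hasDerivAt_sSt B hβ a)).sub
    (hasDerivAt_rSt B hβ hφ hγ hρ a)).congr_deriv ?_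
  ring

end ContinuousCoefficients

section EqOnIci

variable {β φ γ ρ β' φ' γ' ρ' : ℝ → ℝ} {B : ℝ}

theorem sSt_eqOn_Ici (hβ : EqOn β β' (Ici 0)) : EqOn (sSt β B) (sSt β' B) (Ici 0) :=
  fun x hx => by
    rw [sSt, sSt, intervalIntegral.integral_congr_of_eqOn_Ici hβ le_rfl hx]

theorem rSt_eqOn_Ici (hβ : EqOn β β' (Ici 0)) (hφ : EqOn φ φ' (Ici 0))
    (hγ : EqOn γ γ' (Ici 0)) (hρ : EqOn ρ ρ' (Ici 0)) :
    EqOn (rSt β φ γ ρ B) (rSt β' φ' γ' ρ' B) (Ici 0) := by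
  have hg : EqOn (fun h => φ h + γ h + B * ρ h) (fun h => φ' h + γ' h + B * ρ' h) (Ici 0) :=
    fun h hh => by simp only [hφ hh, hγ hh, hρ hh]
  intro x hx
  refine intervalIntegral.integral_congr_of_eqOn_Ici (fun τ hτ => ?_) le_rfl hx
  simp only [hφ hτ, hγ hτ, sSt_eqOn_Ici hβ hτ,
    intervalIntegral.integral_congr_of_eqOn_Ici hg hτ (mem_Ici.mp hx)]

theorem iSt_eqOn_Ici (hβ : EqOn β β' (Ici 0)) (hφ : EqOn φ φ' (Ici 0))
    (hγ : EqOn γ γ' (Ici 0)) (hρ : EqOn ρ ρ' (Ici 0)) :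
    EqOn (iSt β φ γ ρ B) (iSt β' φ' γ' ρ' B) (Ici 0) := fun x hx => by
  rw [iSt, iSt, sSt_eqOn_Ici hβ hx, rSt_eqOn_Ici hβ hφ hγ hρ hx]

end EqOnIci

theorem steady_state_explicit_solution_age_dependent_general
    (β φ γ ρ : ℝ → ℝ) (B : ℝ)
    (hβ : ContinuousOn β (Ici 0)) (hφ : ContinuousOn φ (Ici 0))
    (hγ : ContinuousOn γ (Ici 0)) (hρ : ContinuousOn ρ (Ici 0)) :
    (∀ a ∈ Ici (0:ℝ),
        HasDerivWithinAt (fun x => sSt β B x) (-(B * β a * sSt β B a)) (Ici 0) a) ∧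
    (∀ a ∈ Ici (0:ℝ),
        HasDerivWithinAt (fun x => iSt β φ γ ρ B x)
          (B * β a * sSt β B a - (φ a + γ a) * iSt β φ γ ρ B a
            + B * ρ a * rSt β φ γ ρ B a) (Ici 0) a) ∧
    (∀ a ∈ Ici (0:ℝ),
        HasDerivWithinAt (fun x => rSt β φ γ ρ B x)
          ((φ a + γ a) * iSt β φ γ ρ B a - B * ρ a * rSt β φ γ ρ B a) (Ici 0) a) ∧
    sSt β B 0 = 1 ∧ iSt β φ γ ρ B 0 = 0 ∧ rSt β φ γ ρ B 0 = 0 := by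
  obtain ⟨β', hβ'c, hββ'⟩ := hβ.exists_continuous_eqOn_Ici
  obtain ⟨φ', hφ'c, hφφ'⟩ := hφ.exists_continuous_eqOn_Ici
  obtain ⟨γ', hγ'c, hγγ'⟩ := hγ.exists_continuous_eqOn_Ici
  obtain ⟨ρ', hρ'c, hρρ'⟩ := hρ.exists_continuous_eqOn_Ici
  have hs := sSt_eqOn_Ici (B := B) hββ'
  have hr := rSt_eqOn_Ici (B := B) hββ' hφφ' hγγ' hρρ'
  have hi := iSt_eqOn_Ici (B := B) hββ' hφφ' hγγ' hρρ'
  refine ⟨fun a ha => ?_, fun a ha => ?_, fun a ha => ?_, by simp [sSt],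
    by simp [iSt, sSt, rSt], by simp [rSt]⟩
  · rw [hββ' ha, hs ha]
    exact (hasDerivAt_sSt B hβ'c a).hasDerivWithinAt.congr_of_mem hs ha
  · rw [hββ' ha, hφφ' ha, hγγ' ha, hρρ' ha, hs ha, hi ha, hr ha]
    exact (hasDerivAt_iSt B hβ'c hφ'c hγ'c hρ'c a).hasDerivWithinAt.congr_of_mem
      hi ha
  · rw [hφφ' ha, hγγ' ha, hρρ' ha, hi ha, hr ha]
    exact (hasDerivAt_rSt B hβ'c hφ'c hγ'c hρ'c a).hasDerivWithinAt.congr_of_mem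
      hr ha

/-- For continuous age-dependent coefficients, the explicit profiles `s_B, i_B, r_B`
solve the parametrized linear steady-state system `s' = −Bβ(a)s`,
`i' = Bβ(a)s − (φ(a)+γ(a))i + Bρ(a)r`, `r' = (φ(a)+γ(a))i − Bρ(a)r` on `[0,∞)`,
with `s_B(0) = 1`, `i_B(0) = 0`, `r_B(0) = 0`. -/
theorem steady_state_explicit_solution_age_dependent
    (β φ γ ρ : ℝ → ℝ) (B : ℝ) (hB : 0 ≤ B)
    (hβ : ContinuousOn β (Ici 0)) (hφ : ContinuousOn φ (Ici 0))
    (hγ : ContinuousOn γ (Ici 0)) (hρ : ContinuousOn ρ (Ici 0)) :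
    (∀ a ∈ Ici (0:ℝ),
        HasDerivWithinAt (fun x => sSt β B x) (-(B * β a * sSt β B a)) (Ici 0) a) ∧
    (∀ a ∈ Ici (0:ℝ),
        HasDerivWithinAt (fun x => iSt β φ γ ρ B x)
          (B * β a * sSt β B a - (φ a + γ a) * iSt β φ γ ρ B a
            + B * ρ a * rSt β φ γ ρ B a) (Ici 0) a) ∧
    (∀ a ∈ Ici (0:ℝ),
        HasDerivWithinAt (fun x => rSt β φ γ ρ B x)
          ((φ a + γ a) * iSt β φ γ ρ B a - B * ρ a * rSt β φ γ ρ B a) (Ici 0) a) ∧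
    sSt β B 0 = 1 ∧ iSt β φ γ ρ B 0 = 0 ∧ rSt β φ γ ρ B 0 = 0 :=
  steady_state_explicit_solution_age_dependent_general β φ γ ρ B hβ hφ hγ hρ
end

section
/- Let β, φ, γ, ρ : [0,∞) → ℝ be continuous and nonnegative, and let p∞ : [0,∞) → ℝ be a nonnegative integrable function with ∫₀^∞ p∞(a) da = 1 and ∫₀^∞ p∞(a) (∫₀^a β(h) dh) da < ∞. For B > 0 define s_B(a) = exp(−B ∫₀^a β(h) dh), r_B(a) = ∫₀^a (φ(τ)+γ(τ))(1 − s_B(τ)) exp(−∫_τ^a (φ(h)+γ(h)+Bρ(h)) dh) dτ, i_B(a) = 1 − s_B(a) − r_B(a), and Ĝ(B) = (1/B) ∫₀^∞ i_B(a) p∞(a) da. Then lim_{B→0⁺} Ĝ(B) = ∫₀^∞ ∫₀^a p∞(a) β(τ) exp(−∫_τ^a (φ(h)+γ(h)) dh) dτ da = R₀. -/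
open Set MeasureTheory Filter Topology

/-- The auxiliary function `Ĝ(B) = H(B)/B = (1/B) ∫₀^∞ i_B(a) p∞(a) da`. -/
noncomputable def GhatFun (β φ γ ρ pinf : ℝ → ℝ) (B : ℝ) : ℝ :=
  (1 / B) * ∫ a in Ioi (0:ℝ), iSt β φ γ ρ B a * pinf a

/-!
Both parts of `i_B = (1 - s_B) - r_B` are `O(B)`: `0 ≤ r_B(a) ≤ 1 - s_B(a) ≤ B ∫₀^a β`, so
`p∞(a) ∫₀^a β` dominates `i_B(a) p∞(a) / B` and the limit may be taken under the integral. For fixed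
`a`, `(1 - s_B(a))/B → ∫₀^a β`, and by dominated convergence on `[0, a]`,
`r_B(a)/B → ∫₀^a (φ+γ)(τ) (∫₀^τ β) e^{-∫_τ^a (φ+γ)} dτ`. The difference of the two limits is
`∫₀^a β(τ) e^{-∫_τ^a (φ+γ)} dτ`, since `(β + (φ+γ) ∫₀^τ β) e^{-∫_τ^a (φ+γ)}` is the derivative of
`(∫₀^τ β) e^{-∫_τ^a (φ+γ)}`.
-/

theorem uIcc_subset_Ici {c x y : ℝ} (hx : c ≤ x) (hy : c ≤ y) : uIcc x y ⊆ Ici c :=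
  fun _ hz => le_trans (le_min hx hy) hz.1

section Calculus

variable {f g F : ℝ → ℝ} {a b : ℝ}

theorem continuousOn_primitive_Ici (hf : ContinuousOn f (Ici 0)) :
    ContinuousOn (fun x => ∫ t in (0:ℝ)..x, f t) (Ici 0) := by
  refine continuousOn_of_locally_continuousOn fun x hx => ⟨Iio (x + 1), isOpen_Iio,
    mem_Iio.2 (lt_add_one x), ?_⟩
  have hx1 : (0:ℝ) ≤ x + 1 := by linarith [mem_Ici.1 hx]
  refine (intervalIntegral.continuousOn_primitive_interval ((hf.mono (uIcc_subset_Ici le_rfl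
    hx1)).integrableOn_compact isCompact_uIcc)).mono fun y hy => ?_
  rw [uIcc_of_le hx1]
  exact ⟨hy.1, hy.2.le⟩

theorem monotoneOn_primitive_Ici (hf : ContinuousOn f (Ici 0)) (hf0 : ∀ x ∈ Ici 0, 0 ≤ f x) :
    MonotoneOn (fun x => ∫ t in (0:ℝ)..x, f t) (Ici 0) := fun _ hx _ hy hxy =>
  intervalIntegral.integral_mono_interval le_rfl hx hxy
    ((ae_restrict_mem measurableSet_Ioc).mono fun t ht => hf0 t ht.1.le)
    (hf.mono (uIcc_subset_Ici le_rfl hy)).intervalIntegrable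

theorem continuous_integral_add_mul (hg : IntervalIntegrable g volume a b)
    (hf : IntervalIntegrable f volume a b) :
    Continuous fun c : ℝ => ∫ x in a..b, (g x + c * f x) := by
  have hsplit : (fun c : ℝ => ∫ x in a..b, (g x + c * f x))
      = fun c => (∫ x in a..b, g x) + c * ∫ x in a..b, f x := by
    funext c
    rw [intervalIntegral.integral_add hg (hf.const_mul c), intervalIntegral.integral_const_mul]
  rw [hsplit]
  fun_prop

theorem hasDerivAt_primitive_of_continuousOn_Ici (hf : ContinuousOn f (Ici 0))
    {x : ℝ} (hx : 0 < x) : HasDerivAt (fun x => ∫ t in (0:ℝ)..x, f t) (f x) x :=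
  intervalIntegral.integral_hasDerivAt_right
    ((hf.mono (uIcc_subset_Ici le_rfl hx.le)).intervalIntegrable)
    (ContinuousOn.stronglyMeasurableAtFilter isOpen_Ioi (hf.mono Ioi_subset_Ici_self) x hx)
    (hf.continuousAt (Ici_mem_nhds hx))

theorem continuousOn_mul_exp_neg_integral (hf : ContinuousOn f (Ici 0))
    (hg : ContinuousOn g (Ici 0)) (ha : 0 ≤ a) :
    ContinuousOn (fun τ => f τ * Real.exp (-∫ h in τ..a, g h)) (uIcc 0 a) :=
  (hf.mono (uIcc_subset_Ici le_rfl ha)).mul (intervalIntegral.continuousOn_primitive_interval_left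
    ((hg.mono (uIcc_subset_Ici le_rfl ha)).integrableOn_compact isCompact_uIcc)).neg.rexp

theorem continuousOn_integral_mul_exp_neg_integral (hf : ContinuousOn f (Ici 0))
    (hg : ContinuousOn g (Ici 0)) :
    ContinuousOn (fun a => ∫ τ in (0:ℝ)..a, f τ * Real.exp (-∫ h in τ..a, g h)) (Ici 0) := by
  have hG := continuousOn_primitive_Ici hg
  refine ((continuousOn_primitive_Ici (hf.mul hG.rexp)).mul hG.neg.rexp).congr fun a ha => ?_
  simp only [Pi.mul_apply, Pi.neg_apply]
  rw [← intervalIntegral.integral_mul_const]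
  refine intervalIntegral.integral_congr fun τ hτ => ?_
  have hgi : ∀ x ∈ Ici (0:ℝ), IntervalIntegrable g volume 0 x := fun x hx =>
    (hg.mono (uIcc_subset_Ici le_rfl hx)).intervalIntegrable
  rw [← intervalIntegral.integral_interval_sub_left (hgi a ha)
    (hgi τ (uIcc_subset_Ici le_rfl ha hτ)), mul_assoc, ← Real.exp_add]
  ring_nf

-- The integrand is the derivative of `τ ↦ F τ * exp (-∫ h in τ..a, g h)`.
theorem integral_add_mul_mul_exp_neg_integral (hba : b ≤ a) (hF : ContinuousOn F (Icc b a))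
    (hFf : ∀ x ∈ Ioo b a, HasDerivAt F (f x) x) (hf : IntervalIntegrable f volume b a)
    (hg : ContinuousOn g (Icc b a)) :
    ∫ τ in b..a, (f τ + g τ * F τ) * Real.exp (-∫ h in τ..a, g h)
      = F a - F b * Real.exp (-∫ h in b..a, g h) := by
  have hE : ContinuousOn (fun τ => Real.exp (-∫ h in τ..a, g h)) (Icc b a) := by
    rw [← uIcc_of_le hba] at hg ⊢
    exact (intervalIntegral.continuousOn_primitive_interval_left
      (hg.integrableOn_compact isCompact_uIcc)).neg.rexp
  have hderiv : ∀ x ∈ Ioo b a, HasDerivAt (fun τ => F τ * Real.exp (-∫ h in τ..a, g h))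
      ((f x + g x * F x) * Real.exp (-∫ h in x..a, g h)) x := by
    intro x hx
    have hgx : ContinuousAt g x := hg.continuousAt (Icc_mem_nhds hx.1 hx.2)
    have hint := intervalIntegral.integral_hasDerivAt_left
      ((hg.mono (Icc_subset_Icc hx.1.le le_rfl)).intervalIntegrable_of_Icc hx.2.le)
      (ContinuousOn.stronglyMeasurableAtFilter isOpen_Ioo (hg.mono Ioo_subset_Icc_self) x hx) hgx
    exact ((hFf x hx).mul hint.neg.exp).congr_deriv (by simp only [Pi.neg_apply]; ring)
  rw [intervalIntegral.integral_eq_sub_of_hasDerivAt_of_le hba (hF.mul hE) hderiv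
    ((hf.add ((hg.mul hF).intervalIntegrable_of_Icc hba)).mul_continuousOn
      (by rwa [uIcc_of_le hba]))]
  simp

theorem tendsto_one_sub_exp_neg_mul_div (c : ℝ) :
    Tendsto (fun B => (1 - Real.exp (-(B * c))) / B) (𝓝[>] 0) (𝓝 c) := by
  have h : HasDerivAt (fun B => -Real.exp (-(B * c))) c 0 :=
    (((hasDerivAt_id 0).mul_const c).neg.exp.neg).congr_deriv (by simp)
  refine h.tendsto_slope_zero_right.congr fun B => ?_
  simp only [zero_add, zero_mul, neg_zero, Real.exp_zero, smul_eq_mul]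
  ring

end Calculus

section SteadyState

variable {β φ γ ρ : ℝ → ℝ} {B a : ℝ}

theorem one_sub_sSt_le (β : ℝ → ℝ) (B a : ℝ) : 1 - sSt β B a ≤ B * ∫ h in (0:ℝ)..a, β h := by
  have := Real.one_sub_le_exp_neg (B * ∫ h in (0:ℝ)..a, β h)
  rw [sSt]
  linarith

theorem sSt_le_one (hβ0 : ∀ x ∈ Ici (0:ℝ), 0 ≤ β x) (hB : 0 ≤ B) (ha : 0 ≤ a) :
    sSt β B a ≤ 1 :=
  Real.exp_le_one_iff.2 <| neg_nonpos.2 <|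
    mul_nonneg hB (intervalIntegral.integral_nonneg ha fun x hx => hβ0 x hx.1)

theorem one_sub_sSt_div_mem_Icc (hβ0 : ∀ x ∈ Ici (0:ℝ), 0 ≤ β x) (hB : 0 < B) (ha : 0 ≤ a) :
    (1 - sSt β B a) / B ∈ Icc 0 (∫ h in (0:ℝ)..a, β h) :=
  ⟨div_nonneg (sub_nonneg.2 (sSt_le_one hβ0 hB.le ha)) hB.le,
    (div_le_iff₀' hB).2 (one_sub_sSt_le β B a)⟩

theorem sSt_antitoneOn (hβc : ContinuousOn β (Ici 0)) (hβ0 : ∀ x ∈ Ici (0:ℝ), 0 ≤ β x)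
    (hB : 0 ≤ B) : AntitoneOn (sSt β B) (Ici 0) := by
  intro τ hτ a ha hτa
  unfold sSt
  gcongr
  exact monotoneOn_primitive_Ici hβc hβ0 hτ ha hτa

theorem continuousOn_sSt (hβc : ContinuousOn β (Ici 0)) (B : ℝ) :
    ContinuousOn (sSt β B) (Ici 0) :=
  (continuousOn_const.mul (continuousOn_primitive_Ici hβc)).neg.rexp

theorem rSt_nonneg (hβ0 : ∀ x ∈ Ici (0:ℝ), 0 ≤ β x) (hφ0 : ∀ x ∈ Ici (0:ℝ), 0 ≤ φ x)
    (hγ0 : ∀ x ∈ Ici (0:ℝ), 0 ≤ γ x) (hB : 0 ≤ B) (ha : 0 ≤ a) :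
    0 ≤ rSt β φ γ ρ B a :=
  intervalIntegral.integral_nonneg ha fun τ hτ =>
    mul_nonneg (mul_nonneg (add_nonneg (hφ0 τ hτ.1) (hγ0 τ hτ.1))
      (sub_nonneg.2 (sSt_le_one hβ0 hB hτ.1))) (Real.exp_nonneg _)

theorem rSt_le_one_sub_sSt (hβc : ContinuousOn β (Ici 0)) (hφc : ContinuousOn φ (Ici 0))
    (hγc : ContinuousOn γ (Ici 0)) (hρc : ContinuousOn ρ (Ici 0))
    (hβ0 : ∀ x ∈ Ici (0:ℝ), 0 ≤ β x) (hφ0 : ∀ x ∈ Ici (0:ℝ), 0 ≤ φ x)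
    (hγ0 : ∀ x ∈ Ici (0:ℝ), 0 ≤ γ x) (hρ0 : ∀ x ∈ Ici (0:ℝ), 0 ≤ ρ x) (hB : 0 ≤ B) (ha : 0 ≤ a) :
    rSt β φ γ ρ B a ≤ 1 - sSt β B a := by
  set g : ℝ → ℝ := fun h => φ h + γ h + B * ρ h
  have hgc : ContinuousOn g (Ici 0) := (hφc.add hγc).add (continuousOn_const.mul hρc)
  have hs := sSt_le_one hβ0 hB ha
  calc rSt β φ γ ρ B a
      ≤ ∫ τ in (0:ℝ)..a, (0 + g τ * (1 - sSt β B a)) * Real.exp (-∫ h in τ..a, g h) := by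
        refine intervalIntegral.integral_mono_on ha
          ((continuousOn_mul_exp_neg_integral ((hφc.add hγc).mul
            (continuousOn_const.sub (continuousOn_sSt hβc B))) hgc ha).intervalIntegrable)
          ((continuousOn_mul_exp_neg_integral (continuousOn_const.add
            (hgc.mul continuousOn_const)) hgc ha).intervalIntegrable) fun τ hτ => ?_
        have hτ0 : 0 ≤ τ := hτ.1
        have hφγ : 0 ≤ φ τ + γ τ := add_nonneg (hφ0 τ hτ0) (hγ0 τ hτ0)
        have hφγg : φ τ + γ τ ≤ g τ := le_add_of_nonneg_right (mul_nonneg hB (hρ0 τ hτ0))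
        have hsτ : sSt β B a ≤ sSt β B τ := sSt_antitoneOn hβc hβ0 hB hτ0 ha hτ.2
        have hsτ_le_one := sSt_le_one hβ0 hB hτ0
        rw [zero_add]
        gcongr
        linarith
    _ = (1 - sSt β B a) * (1 - Real.exp (-∫ h in (0:ℝ)..a, g h)) := by
        rw [integral_add_mul_mul_exp_neg_integral ha continuousOn_const
          (fun x _ => hasDerivAt_const x _) intervalIntegrable_const
          (hgc.mono Icc_subset_Ici_self)]
        ring
    _ ≤ 1 - sSt β B a :=
        mul_le_of_le_one_right (sub_nonneg.2 hs) (sub_le_self _ (Real.exp_nonneg _))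

theorem iSt_mem_Icc (hβc : ContinuousOn β (Ici 0)) (hφc : ContinuousOn φ (Ici 0))
    (hγc : ContinuousOn γ (Ici 0)) (hρc : ContinuousOn ρ (Ici 0))
    (hβ0 : ∀ x ∈ Ici (0:ℝ), 0 ≤ β x) (hφ0 : ∀ x ∈ Ici (0:ℝ), 0 ≤ φ x)
    (hγ0 : ∀ x ∈ Ici (0:ℝ), 0 ≤ γ x) (hρ0 : ∀ x ∈ Ici (0:ℝ), 0 ≤ ρ x) (hB : 0 ≤ B) (ha : 0 ≤ a) :
    iSt β φ γ ρ B a ∈ Icc 0 (B * ∫ h in (0:ℝ)..a, β h) := by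
  have hr0 := rSt_nonneg (ρ := ρ) hβ0 hφ0 hγ0 hB ha
  have hr1 := rSt_le_one_sub_sSt hβc hφc hγc hρc hβ0 hφ0 hγ0 hρ0 hB ha
  have hs := one_sub_sSt_le β B a
  constructor <;> unfold iSt <;> linarith

theorem continuousOn_iSt (hβc : ContinuousOn β (Ici 0)) (hφc : ContinuousOn φ (Ici 0))
    (hγc : ContinuousOn γ (Ici 0)) (hρc : ContinuousOn ρ (Ici 0)) (B : ℝ) :
    ContinuousOn (iSt β φ γ ρ B) (Ici 0) :=
  (continuousOn_const.sub (continuousOn_sSt hβc B)).sub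
    (continuousOn_integral_mul_exp_neg_integral
      ((hφc.add hγc).mul (continuousOn_const.sub (continuousOn_sSt hβc B)))
      ((hφc.add hγc).add (continuousOn_const.mul hρc)))

theorem tendsto_rSt_div (hβc : ContinuousOn β (Ici 0)) (hφc : ContinuousOn φ (Ici 0))
    (hγc : ContinuousOn γ (Ici 0)) (hρc : ContinuousOn ρ (Ici 0))
    (hβ0 : ∀ x ∈ Ici (0:ℝ), 0 ≤ β x) (hφ0 : ∀ x ∈ Ici (0:ℝ), 0 ≤ φ x)
    (hγ0 : ∀ x ∈ Ici (0:ℝ), 0 ≤ γ x) (hρ0 : ∀ x ∈ Ici (0:ℝ), 0 ≤ ρ x) (ha : 0 ≤ a) :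
    Tendsto (fun B => rSt β φ γ ρ B a / B) (𝓝[>] 0)
      (𝓝 (∫ τ in (0:ℝ)..a, (φ τ + γ τ) * (∫ h in (0:ℝ)..τ, β h)
        * Real.exp (-∫ h in τ..a, (φ h + γ h)))) := by
  have hφγc : ContinuousOn (fun h => φ h + γ h) (Ici 0) := hφc.add hγc
  have hdiv : ∀ B, rSt β φ γ ρ B a / B = ∫ τ in (0:ℝ)..a, (φ τ + γ τ) * ((1 - sSt β B τ) / B)
      * Real.exp (-∫ h in τ..a, (φ h + γ h + B * ρ h)) := fun B => by
    rw [rSt, ← intervalIntegral.integral_div]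
    congr 1 with τ
    ring
  refine Tendsto.congr (fun B => (hdiv B).symm) <|
    intervalIntegral.tendsto_integral_filter_of_dominated_convergence
      (fun τ => (φ τ + γ τ) * ∫ h in (0:ℝ)..a, β h) ?_ ?_ ?_ ?_
  · refine Eventually.of_forall fun B => ?_
    exact ((continuousOn_mul_exp_neg_integral (hφγc.mul
      ((continuousOn_const.sub (continuousOn_sSt hβc B)).div_const B))
      (hφγc.add (continuousOn_const.mul hρc)) ha).mono uIoc_subset_uIcc).aestronglyMeasurable
      measurableSet_uIoc
  · filter_upwards [self_mem_nhdsWithin] with B (hB : 0 < B)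
    refine ae_of_all _ fun τ hτ => ?_
    rw [uIoc_of_le ha] at hτ
    have hτ0 : 0 ≤ τ := hτ.1.le
    have hφγ : 0 ≤ φ τ + γ τ := add_nonneg (hφ0 τ hτ0) (hγ0 τ hτ0)
    obtain ⟨hs0, hsτ⟩ := one_sub_sSt_div_mem_Icc hβ0 hB hτ0
    have hs1 := hsτ.trans (monotoneOn_primitive_Ici hβc hβ0 hτ0 ha hτ.2)
    have hE : Real.exp (-∫ h in τ..a, (φ h + γ h + B * ρ h)) ≤ 1 :=
      Real.exp_le_one_iff.2 <| neg_nonpos.2 <| intervalIntegral.integral_nonneg hτ.2 fun x hx =>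
        have hx0 : 0 ≤ x := hτ0.trans hx.1
        add_nonneg (add_nonneg (hφ0 x hx0) (hγ0 x hx0)) (mul_nonneg hB.le (hρ0 x hx0))
    rw [Real.norm_of_nonneg (mul_nonneg (mul_nonneg hφγ hs0) (Real.exp_nonneg _))]
    calc _ ≤ (φ τ + γ τ) * (∫ h in (0:ℝ)..a, β h) * 1 := by
          gcongr
          exact mul_nonneg hφγ (hs0.trans hs1)
      _ = (φ τ + γ τ) * ∫ h in (0:ℝ)..a, β h := mul_one _
  · exact ((hφγc.mono (uIcc_subset_Ici le_rfl ha)).mul continuousOn_const).intervalIntegrable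
  · refine ae_of_all _ fun τ hτ => ?_
    have hτ0 : 0 ≤ τ := by rw [uIoc_of_le ha] at hτ; exact hτ.1.le
    have hE : Tendsto (fun B => Real.exp (-∫ h in τ..a, (φ h + γ h + B * ρ h))) (𝓝[>] 0)
        (𝓝 (Real.exp (-∫ h in τ..a, (φ h + γ h)))) :=
      ((continuous_integral_add_mul (hφγc.mono (uIcc_subset_Ici hτ0 ha)).intervalIntegrable
        (hρc.mono (uIcc_subset_Ici hτ0 ha)).intervalIntegrable).neg.rexp.tendsto' 0 _
        (by simp)).mono_left nhdsWithin_le_nhds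
    exact (tendsto_const_nhds.mul (tendsto_one_sub_exp_neg_mul_div _)).mul hE

theorem tendsto_iSt_div (hβc : ContinuousOn β (Ici 0)) (hφc : ContinuousOn φ (Ici 0))
    (hγc : ContinuousOn γ (Ici 0)) (hρc : ContinuousOn ρ (Ici 0))
    (hβ0 : ∀ x ∈ Ici (0:ℝ), 0 ≤ β x) (hφ0 : ∀ x ∈ Ici (0:ℝ), 0 ≤ φ x)
    (hγ0 : ∀ x ∈ Ici (0:ℝ), 0 ≤ γ x) (hρ0 : ∀ x ∈ Ici (0:ℝ), 0 ≤ ρ x) (ha : 0 ≤ a) :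
    Tendsto (fun B => iSt β φ γ ρ B a / B) (𝓝[>] 0)
      (𝓝 (∫ τ in (0:ℝ)..a, β τ * Real.exp (-∫ h in τ..a, (φ h + γ h)))) := by
  have hφγc : ContinuousOn (fun h => φ h + γ h) (Ici 0) := hφc.add hγc
  have hFc := continuousOn_primitive_Ici hβc
  have hFTC := integral_add_mul_mul_exp_neg_integral ha (hFc.mono Icc_subset_Ici_self)
    (fun x hx => hasDerivAt_primitive_of_continuousOn_Ici hβc hx.1)
    (hβc.mono (uIcc_subset_Ici le_rfl ha)).intervalIntegrable (hφγc.mono Icc_subset_Ici_self)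
  simp only [intervalIntegral.integral_same, zero_mul, sub_zero] at hFTC
  have hlim : (∫ h in (0:ℝ)..a, β h) - ∫ τ in (0:ℝ)..a, (φ τ + γ τ) * (∫ h in (0:ℝ)..τ, β h)
        * Real.exp (-∫ h in τ..a, (φ h + γ h))
      = ∫ τ in (0:ℝ)..a, β τ * Real.exp (-∫ h in τ..a, (φ h + γ h)) := by
    rw [← hFTC, ← intervalIntegral.integral_sub
      (continuousOn_mul_exp_neg_integral (f := fun τ => β τ + (φ τ + γ τ) * ∫ h in (0:ℝ)..τ, β h)
        (hβc.add (hφγc.mul hFc)) hφγc ha).intervalIntegrable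
      (continuousOn_mul_exp_neg_integral (f := fun τ => (φ τ + γ τ) * ∫ h in (0:ℝ)..τ, β h)
        (hφγc.mul hFc) hφγc ha).intervalIntegrable]
    congr 1 with τ
    ring
  rw [← hlim]
  refine ((tendsto_one_sub_exp_neg_mul_div _).sub
    (tendsto_rSt_div hβc hφc hγc hρc hβ0 hφ0 hγ0 hρ0 ha)).congr fun B => ?_
  rw [iSt, sSt]
  ring

end SteadyState

theorem Ghat_limit_at_zero_is_R0_general
    (β φ γ ρ pinf : ℝ → ℝ)
    (hβc : ContinuousOn β (Ici 0)) (hφc : ContinuousOn φ (Ici 0))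
    (hγc : ContinuousOn γ (Ici 0)) (hρc : ContinuousOn ρ (Ici 0))
    (hβ0 : ∀ a ∈ Ici (0:ℝ), 0 ≤ β a) (hφ0 : ∀ a ∈ Ici (0:ℝ), 0 ≤ φ a)
    (hγ0 : ∀ a ∈ Ici (0:ℝ), 0 ≤ γ a) (hρ0 : ∀ a ∈ Ici (0:ℝ), 0 ≤ ρ a)
    (hp0 : ∀ a ∈ Ici (0:ℝ), 0 ≤ pinf a)
    (hp_int : IntegrableOn pinf (Ioi 0))
    (hβ_int : IntegrableOn (fun a => pinf a * ∫ h in (0:ℝ)..a, β h) (Ioi 0)) :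
    Tendsto (GhatFun β φ γ ρ pinf) (𝓝[>] 0)
      (𝓝 (∫ a in Ioi (0:ℝ), ∫ τ in (0:ℝ)..a,
        pinf a * β τ * Real.exp (-(∫ h in τ..a, (φ h + γ h))))) := by
  have hG : GhatFun β φ γ ρ pinf = fun B => ∫ a in Ioi (0:ℝ), iSt β φ γ ρ B a / B * pinf a := by
    funext B
    rw [GhatFun, ← integral_const_mul]
    congr 1 with a
    ring
  have hR₀ : (fun a => ∫ τ in (0:ℝ)..a, pinf a * β τ * Real.exp (-(∫ h in τ..a, (φ h + γ h))))
      = fun a => (∫ τ in (0:ℝ)..a, β τ * Real.exp (-∫ h in τ..a, (φ h + γ h))) * pinf a := by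
    funext a
    rw [← intervalIntegral.integral_mul_const]
    congr 1 with τ
    ring
  rw [hG, hR₀]
  refine tendsto_integral_filter_of_dominated_convergence _ ?_ ?_ hβ_int ?_
  · exact Eventually.of_forall fun B =>
      ((((continuousOn_iSt hβc hφc hγc hρc B).div_const B).mono
        Ioi_subset_Ici_self).aestronglyMeasurable measurableSet_Ioi).mul hp_int.1
  · filter_upwards [self_mem_nhdsWithin] with B (hB : 0 < B)
    filter_upwards [ae_restrict_mem measurableSet_Ioi] with a (ha : 0 < a)
    obtain ⟨hi0, hi1⟩ := iSt_mem_Icc hβc hφc hγc hρc hβ0 hφ0 hγ0 hρ0 hB.le ha.le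
    rw [Real.norm_of_nonneg (mul_nonneg (div_nonneg hi0 hB.le) (hp0 a ha.le)), mul_comm]
    exact mul_le_mul_of_nonneg_left ((div_le_iff₀' hB).2 hi1) (hp0 a ha.le)
  · filter_upwards [ae_restrict_mem measurableSet_Ioi] with a (ha : 0 < a)
    exact (tendsto_iSt_div hβc hφc hγc hρc hβ0 hφ0 hγ0 hρ0 ha.le).mul_const (pinf a)

/-- The limit of `Ĝ(B)` as `B → 0⁺` is the basic reproductive number
`R₀ = ∫₀^∞ ∫₀^a p∞(a) β(τ) exp(−∫_τ^a (φ+γ)) dτ da`. -/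
theorem Ghat_limit_at_zero_is_R0
    (β φ γ ρ pinf : ℝ → ℝ)
    (hβc : ContinuousOn β (Ici 0)) (hφc : ContinuousOn φ (Ici 0))
    (hγc : ContinuousOn γ (Ici 0)) (hρc : ContinuousOn ρ (Ici 0))
    (hβ0 : ∀ a ∈ Ici (0:ℝ), 0 ≤ β a) (hφ0 : ∀ a ∈ Ici (0:ℝ), 0 ≤ φ a)
    (hγ0 : ∀ a ∈ Ici (0:ℝ), 0 ≤ γ a) (hρ0 : ∀ a ∈ Ici (0:ℝ), 0 ≤ ρ a)
    (hp0 : ∀ a ∈ Ici (0:ℝ), 0 ≤ pinf a)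
    (hp_int : IntegrableOn pinf (Ioi 0))
    (hp_one : ∫ a in Ioi (0:ℝ), pinf a = 1)
    (hβ_int : IntegrableOn (fun a => pinf a * ∫ h in (0:ℝ)..a, β h) (Ioi 0)) :
    Tendsto (GhatFun β φ γ ρ pinf) (𝓝[>] 0)
      (𝓝 (∫ a in Ioi (0:ℝ), ∫ τ in (0:ℝ)..a,
        pinf a * β τ * Real.exp (-(∫ h in τ..a, (φ h + γ h))))) :=
  Ghat_limit_at_zero_is_R0_general β φ γ ρ pinf hβc hφc hγc hρc hβ0 hφ0 hγ0 hρ0 hp0 hp_int hβ_int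
end

section
/- Let β : [0,∞) → ℝ and B : [0,∞) → ℝ be continuous, and on the region {(t,a) : t > a ≥ 0} define s(t,a) = exp(−∫₀^a β(h) B(h+t−a) dh) and q(t,a) = ∫₀^a β(h) B(h+t−a) s(h+t−a, h) dh. Then q(t,0) = 0 for all t > 0, q(t,a) = 1 − s(t,a) for all t > a, and at every point (t,a) with t > a the directional derivative of q in the direction (1,1) exists and equals β(a) B(t) s(t,a); that is, (∂ₜ + ∂ₐ) q(t,a) = β(a) B(t) s(t,a). -/
/-!
Along a characteristic `t - a = c` both `s` and `q` only involve `g(u) = β(u) B(u + c)`: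
`s = exp(-G(a))` with `G(a) = ∫₀^a g`, and `q = ∫₀^a g e^{-G}`, which is `1 - e^{-G(a)}` by the
fundamental theorem of calculus. Moving along the characteristic only changes `a`, so the
transport derivative is `G'(a) e^{-G(a)} = β(a) B(t) s(t,a)`.
-/

open Set MeasureTheory

/-- The method-of-characteristics susceptible fraction
`s(t,a) = exp(−∫₀^a β(h) B(h+t−a) dh)` for a given force of infection `B`. -/
noncomputable def sChar (β B : ℝ → ℝ) (t a : ℝ) : ℝ :=
  Real.exp (-(∫ h in (0:ℝ)..a, β h * B (h + t - a)))

/-- The combined infected-plus-recovered fraction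
`q(t,a) = ∫₀^a β(h) B(h+t−a) s(h+t−a, h) dh`. -/
noncomputable def qChar (β B : ℝ → ℝ) (t a : ℝ) : ℝ :=
  ∫ h in (0:ℝ)..a, β h * B (h + t - a) * sChar β B (h + t - a) h

theorem hasDerivAt_one_sub_exp_neg_integral {g : ℝ → ℝ} (hg : Continuous g) (x : ℝ) :
    HasDerivAt (fun y => 1 - Real.exp (-∫ u in (0:ℝ)..y, g u))
      (g x * Real.exp (-∫ u in (0:ℝ)..x, g u)) x := by
  have hG : HasDerivAt (fun y => ∫ u in (0:ℝ)..y, g u) (g x) x :=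
    hg.integral_hasStrictDerivAt 0 x |>.hasDerivAt
  exact (hG.neg.exp.const_sub 1).congr_deriv (by simp [mul_comm])

theorem integral_mul_exp_neg_integral {g : ℝ → ℝ} (hg : Continuous g) (a : ℝ) :
    ∫ h in (0:ℝ)..a, g h * Real.exp (-∫ u in (0:ℝ)..h, g u) =
      1 - Real.exp (-∫ u in (0:ℝ)..a, g u) := by
  have hcont : Continuous fun h => g h * Real.exp (-∫ u in (0:ℝ)..h, g u) :=
    hg.mul (intervalIntegral.continuous_primitive (fun _ _ => hg.intervalIntegrable _ _) 0).neg.rexp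
  rw [intervalIntegral.integral_eq_sub_of_hasDerivAt
    (fun x _ => hasDerivAt_one_sub_exp_neg_integral hg x) (hcont.intervalIntegrable 0 a)]
  simp

theorem sChar_eq (β B : ℝ → ℝ) (t a : ℝ) :
    sChar β B t a = Real.exp (-∫ u in (0:ℝ)..a, β u * B (u + (t - a))) := by
  simp only [sChar, add_sub_assoc]

theorem qChar_eq_one_sub_sChar {β B : ℝ → ℝ} (hβ : Continuous β) (hB : Continuous B) (t a : ℝ) :
    qChar β B t a = 1 - sChar β B t a := by
  have hchar : ∀ h, h + t - a - h = t - a := fun h => by ring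
  have hg : Continuous fun u => β u * B (u + (t - a)) := by fun_prop
  simp only [qChar, sChar_eq, hchar]
  simp only [add_sub_assoc]
  exact integral_mul_exp_neg_integral hg a

/-- On the region `t > a ≥ 0`: `q(t,0) = 0`, `q(t,a) = 1 − s(t,a)`, and the
directional derivative of `q` along `(1,1)` exists and equals `β(a) B(t) s(t,a)`. -/
theorem qChar_solves_transport
    (β B : ℝ → ℝ) (hβ : Continuous β) (hB : Continuous B) :
    (∀ t : ℝ, 0 < t → qChar β B t 0 = 0) ∧
    (∀ t a : ℝ, 0 ≤ a → a < t → qChar β B t a = 1 - sChar β B t a) ∧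
    (∀ t a : ℝ, 0 ≤ a → a < t →
        HasDerivAt (fun τ => qChar β B (t + τ) (a + τ))
          (β a * B t * sChar β B t a) 0) := by
  refine ⟨fun t _ => by simp [qChar], fun t a _ _ => qChar_eq_one_sub_sChar hβ hB t a, ?_⟩
  intro t a _ _
  have hchar : ∀ τ, t + τ - (a + τ) = t - a := fun τ => by ring
  have hg : Continuous fun u => β u * B (u + (t - a)) := by fun_prop
  have hq : (fun τ => qChar β B (t + τ) (a + τ)) =
      fun τ => 1 - Real.exp (-∫ u in (0:ℝ)..a + τ, β u * B (u + (t - a))) := by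
    funext τ
    rw [qChar_eq_one_sub_sChar hβ hB, sChar_eq, hchar]
  have hderiv := (hasDerivAt_one_sub_exp_neg_integral hg (a + 0)).comp_const_add a 0
  rw [hq]
  refine hderiv.congr_deriv ?_
  rw [sChar_eq, add_zero, add_sub_cancel]
end

section
/- Let φ, γ, ρ : [0,∞) → ℝ be continuous and let B ∈ ℝ. Define the matrix-valued function M(a) = [[−(φ(a)+γ(a)), Bρ(a)], [φ(a)+γ(a), −Bρ(a)]] and set E(a) = exp(−∫₀^a (φ(h)+γ(h)+Bρ(h)) dh). Then the vector functions X⁽¹⁾(a) = (E(a), −E(a)) and X⁽²⁾(a) = (1 − E(a) − ∫₀^a (φ(τ)+γ(τ)) exp(−∫_τ^a (φ(h)+γ(h)+Bρ(h)) dh) dτ, E(a) + ∫₀^a (φ(τ)+γ(τ)) exp(−∫_τ^a (φ(h)+γ(h)+Bρ(h)) dh) dτ) both satisfy the homogeneous linear system X'(a) = M(a) X(a) for all a ≥ 0, with initial conditions X⁽¹⁾(0) = (1, −1) and X⁽²⁾(0) = (0, 1); in particular they are linearly independent solutions. -/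
/-!
Write `μ = φ + γ + Bρ` for the total exit rate and `k = φ + γ` for the transfer rate, so that
`M(a) = [[-k, Bρ], [k, -Bρ]]` has zero column sums and `μ = k + Bρ`. By the fundamental theorem of
calculus `E' = -μ E`, and `J` is the Duhamel solution of `J' = k - μ J`, `J(0) = 0`: on `[0, a]` one
has `∫_τ^a μ = ∫_0^a μ - ∫_0^τ μ`, so `J(a) = E(a) ∫_0^a k(τ) e^{∫_0^τ μ} dτ` and the product rule
applies. Since `μ = k + Bρ`, each of the four component equations reduces to one of these two
scalar equations. Linear independence is read off at `a = 0`, where the solutions are `(1, -1)`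
and `(0, 1)`.
-/

open Set MeasureTheory

/-- `E(a) = exp(−∫₀^a (φ(h)+γ(h)+Bρ(h)) dh)`. -/
noncomputable def Efun (φ γ ρ : ℝ → ℝ) (B a : ℝ) : ℝ :=
  Real.exp (-(∫ h in (0:ℝ)..a, (φ h + γ h + B * ρ h)))

/-- `J(a) = ∫₀^a (φ(τ)+γ(τ)) exp(−∫_τ^a (φ(h)+γ(h)+Bρ(h)) dh) dτ`. -/
noncomputable def Jfun (φ γ ρ : ℝ → ℝ) (B a : ℝ) : ℝ :=
  ∫ τ in (0:ℝ)..a, (φ τ + γ τ) * Real.exp (-(∫ h in τ..a, (φ h + γ h + B * ρ h)))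

/-- First fundamental solution `X⁽¹⁾(a) = (E(a), −E(a))`. -/
noncomputable def Xone (φ γ ρ : ℝ → ℝ) (B a : ℝ) : ℝ × ℝ :=
  (Efun φ γ ρ B a, -Efun φ γ ρ B a)

/-- Second fundamental solution `X⁽²⁾(a) = (1 − E(a) − J(a), E(a) + J(a))`. -/
noncomputable def Xtwo (φ γ ρ : ℝ → ℝ) (B a : ℝ) : ℝ × ℝ :=
  (1 - Efun φ γ ρ B a - Jfun φ γ ρ B a, Efun φ γ ρ B a + Jfun φ γ ρ B a)

open Real

theorem ContinuousOn.hasDerivWithinAt_integral_Ici {E : Type*} [NormedAddCommGroup E]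
    [NormedSpace ℝ E] [CompleteSpace E] {f : ℝ → E} {c a : ℝ}
    (hf : ContinuousOn f (Ici c)) (ha : a ∈ Ici c) :
    HasDerivWithinAt (fun x => ∫ t in c..x, f t) (f a) (Ici c) a := by
  set g : ℝ → E := fun x => f (max c x)
  have hg : Continuous g :=
    hf.comp_continuous (continuous_const.max continuous_id) fun x => le_max_left c x
  have hfg : EqOn f g (Ici c) := fun x hx => by simp only [g, max_eq_right (mem_Ici.1 hx)]
  have hint : EqOn (fun x => ∫ t in c..x, f t) (fun x => ∫ t in c..x, g t) (Ici c) :=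
    fun x hx => intervalIntegral.integral_congr fun t ht =>
      hfg (by rw [uIcc_of_le (mem_Ici.1 hx)] at ht; exact ht.1)
  rw [hfg ha]
  exact (hg.integral_hasStrictDerivAt c a).hasDerivAt.hasDerivWithinAt.congr hint (hint ha)

section Duhamel

variable {μ k : ℝ → ℝ} {c a : ℝ}

theorem hasDerivWithinAt_exp_neg_integral (hμ : ContinuousOn μ (Ici c)) (ha : a ∈ Ici c) :
    HasDerivWithinAt (fun x => exp (-∫ h in c..x, μ h))
      (-μ a * exp (-∫ h in c..a, μ h)) (Ici c) a :=
  (hμ.hasDerivWithinAt_integral_Ici ha).neg.exp.congr_deriv (mul_comm _ _)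

theorem integral_mul_exp_neg_integral_eq_s17 (hμ : ContinuousOn μ (Ici c)) (ha : a ∈ Ici c) :
    ∫ τ in c..a, k τ * exp (-∫ h in τ..a, μ h) =
      exp (-∫ h in c..a, μ h) * ∫ τ in c..a, k τ * exp (∫ h in c..τ, μ h) := by
  rw [← intervalIntegral.integral_const_mul]
  refine intervalIntegral.integral_congr fun τ hτ => ?_
  rw [uIcc_of_le (mem_Ici.1 ha)] at hτ
  have hint : ∀ b ∈ Icc c a, IntervalIntegrable μ volume c b := fun b hb =>
    (hμ.mono fun t ht => (uIcc_of_le hb.1 ▸ ht).1).intervalIntegrable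
  have hsplit : ∫ h in τ..a, μ h = (∫ h in c..a, μ h) - ∫ h in c..τ, μ h :=
    (intervalIntegral.integral_interval_sub_left (hint a ⟨mem_Ici.1 ha, le_rfl⟩)
      (hint τ hτ)).symm
  rw [hsplit, neg_sub, exp_sub, exp_neg]
  ring

theorem hasDerivWithinAt_integral_mul_exp_neg_integral (hk : ContinuousOn k (Ici c))
    (hμ : ContinuousOn μ (Ici c)) (ha : a ∈ Ici c) :
    HasDerivWithinAt (fun x => ∫ τ in c..x, k τ * exp (-∫ h in τ..x, μ h))
      (k a - μ a * ∫ τ in c..a, k τ * exp (-∫ h in τ..a, μ h)) (Ici c) a := by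
  set F : ℝ → ℝ := fun x => ∫ h in c..x, μ h
  have hF : ContinuousOn F (Ici c) := fun x hx =>
    (hμ.hasDerivWithinAt_integral_Ici hx).continuousWithinAt
  have hG : HasDerivWithinAt (fun x => ∫ τ in c..x, k τ * exp (F τ)) (k a * exp (F a)) (Ici c) a :=
    (hk.mul hF.rexp).hasDerivWithinAt_integral_Ici ha
  have hprod := (hasDerivWithinAt_exp_neg_integral hμ ha).mul hG
  have hrepr : EqOn (fun x => ∫ τ in c..x, k τ * exp (-∫ h in τ..x, μ h))
      (fun x => exp (-F x) * ∫ τ in c..x, k τ * exp (F τ)) (Ici c) :=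
    fun x hx => integral_mul_exp_neg_integral_eq_s17 hμ hx
  refine (hprod.congr hrepr (hrepr ha)).congr_deriv ?_
  rw [integral_mul_exp_neg_integral_eq_s17 hμ ha, exp_neg]
  field_simp
  ring

end Duhamel

/-- `X⁽¹⁾` and `X⁽²⁾` solve the homogeneous linear system `X' = M(a)X` with
`M(a) = [[−(φ(a)+γ(a)), Bρ(a)], [φ(a)+γ(a), −Bρ(a)]]` for all `a ≥ 0`, with
`X⁽¹⁾(0) = (1,−1)` and `X⁽²⁾(0) = (0,1)`; in particular they are linearly
independent. -/
theorem fundamental_solutions_homogeneous_system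
    (φ γ ρ : ℝ → ℝ) (B : ℝ)
    (hφ : ContinuousOn φ (Ici 0)) (hγ : ContinuousOn γ (Ici 0))
    (hρ : ContinuousOn ρ (Ici 0)) :
    (∀ a ∈ Ici (0:ℝ),
        HasDerivWithinAt (fun x => (Xone φ γ ρ B x).1)
          (-(φ a + γ a) * (Xone φ γ ρ B a).1 + B * ρ a * (Xone φ γ ρ B a).2)
          (Ici 0) a) ∧
    (∀ a ∈ Ici (0:ℝ),
        HasDerivWithinAt (fun x => (Xone φ γ ρ B x).2)
          ((φ a + γ a) * (Xone φ γ ρ B a).1 - B * ρ a * (Xone φ γ ρ B a).2)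
          (Ici 0) a) ∧
    (∀ a ∈ Ici (0:ℝ),
        HasDerivWithinAt (fun x => (Xtwo φ γ ρ B x).1)
          (-(φ a + γ a) * (Xtwo φ γ ρ B a).1 + B * ρ a * (Xtwo φ γ ρ B a).2)
          (Ici 0) a) ∧
    (∀ a ∈ Ici (0:ℝ),
        HasDerivWithinAt (fun x => (Xtwo φ γ ρ B x).2)
          ((φ a + γ a) * (Xtwo φ γ ρ B a).1 - B * ρ a * (Xtwo φ γ ρ B a).2)
          (Ici 0) a) ∧
    Xone φ γ ρ B 0 = (1, -1) ∧ Xtwo φ γ ρ B 0 = (0, 1) ∧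
    (∀ c₁ c₂ : ℝ,
        (∀ a ∈ Ici (0:ℝ), c₁ • Xone φ γ ρ B a + c₂ • Xtwo φ γ ρ B a = (0, 0)) →
        c₁ = 0 ∧ c₂ = 0) := by
  have hk : ContinuousOn (fun t => φ t + γ t) (Ici 0) := hφ.add hγ
  have hμ : ContinuousOn (fun t => φ t + γ t + B * ρ t) (Ici 0) :=
    hk.add (continuousOn_const.mul hρ)
  have hE (a : ℝ) (ha : a ∈ Ici (0:ℝ)) : HasDerivWithinAt (Efun φ γ ρ B)
      (-(φ a + γ a + B * ρ a) * Efun φ γ ρ B a) (Ici 0) a :=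
    hasDerivWithinAt_exp_neg_integral hμ ha
  have hJ (a : ℝ) (ha : a ∈ Ici (0:ℝ)) : HasDerivWithinAt (Jfun φ γ ρ B)
      (φ a + γ a - (φ a + γ a + B * ρ a) * Jfun φ γ ρ B a) (Ici 0) a :=
    hasDerivWithinAt_integral_mul_exp_neg_integral hk hμ ha
  have hX₁ : Xone φ γ ρ B 0 = (1, -1) := by simp [Xone, Efun]
  have hX₂ : Xtwo φ γ ρ B 0 = (0, 1) := by simp [Xtwo, Efun, Jfun]
  refine ⟨fun a ha => (hE a ha).congr_deriv (by simp only [Xone]; ring),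
    fun a ha => (hE a ha).neg.congr_deriv (by simp only [Xone]; ring),
    fun a ha => (((hE a ha).const_sub 1).sub (hJ a ha)).congr_deriv (by simp only [Xtwo]; ring),
    fun a ha => ((hE a ha).add (hJ a ha)).congr_deriv (by simp only [Xtwo]; ring),
    hX₁, hX₂, fun c₁ c₂ hc => ?_⟩
  have h0 := hc 0 self_mem_Ici
  simp only [hX₁, hX₂, Prod.smul_mk, Prod.mk_add_mk, Prod.mk.injEq, smul_eq_mul] at h0
  constructor <;> linarith [h0.1, h0.2]
end
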